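/- arXiv:math/0206141 — 7 statements merged into one kernel-verified Lean document; each statement's English description precedes it below -/
import Mathlib

section
/- Let k be a field, K a field extension of k, A a k-algebra, and ℓ, m positive integers. If ρ : A → E_{(ℓ,m)}(K) is a nonsplit (ℓ,m)-extension of irreducible representations, then the Jacobson radical of the K-algebra Λ = Kρ(A) is exactly T_{(ℓ,m)}(K). -/
open Matrix

noncomputable section

/-- The `n × n` matrix with `1`s on the superdiagonal and `0`s elsewhere. -/
def supDiag (K : Type*) [Semiring K] (n : ℕ) : Matrix (Fin n) (Fin n) K :=
  Matrix.of fun i j => if (i : ℕ) + 1 = (j : ℕ) then 1 else 0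

/-- The `n × n` matrix with `1`s on the subdiagonal and `0`s elsewhere. -/
def subDiag (K : Type*) [Semiring K] (n : ℕ) : Matrix (Fin n) (Fin n) K :=
  (supDiag K n).transpose

/-- Block index function for the `(ℓ, m)` block decomposition of `Fin (ℓ + m)`. -/
def blkIdx (ℓ m : ℕ) (i : Fin (ℓ + m)) : ℕ := if (i : ℕ) < ℓ then 0 else 1

/-- `E_{(ℓ,m)}(K)`: the `K`-subalgebra of `M_{ℓ+m}(K)` of block upper triangular
matrices `[[a, b], [0, c]]` with `a ∈ M_ℓ(K)`, `b ∈ M_{ℓ×m}(K)`, `c ∈ M_m(K)`. -/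
def Eblk (K : Type*) [CommRing K] (ℓ m : ℕ) :
    Subalgebra K (Matrix (Fin (ℓ + m)) (Fin (ℓ + m)) K) where
  carrier := { M | M.BlockTriangular (blkIdx ℓ m) }
  mul_mem' ha hb := ha.mul hb
  add_mem' ha hb := ha.add hb
  one_mem' := Matrix.blockTriangular_one
  algebraMap_mem' r := fun i j hij => by
    rw [Matrix.algebraMap_matrix_apply, if_neg]
    rintro rfl
    exact lt_irrefl _ hij

/-- `T_{(ℓ,m)}(K)`: the set of block matrices `[[0, b], [0, 0]]` with `b ∈ M_{ℓ×m}(K)`. -/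
def Tblk (K : Type*) [Semiring K] (ℓ m : ℕ) : Set (Matrix (Fin (ℓ + m)) (Fin (ℓ + m)) K) :=
  { M | ∀ i j : Fin (ℓ + m), ¬((i : ℕ) < ℓ ∧ ℓ ≤ (j : ℕ)) → M i j = 0 }

/-- `π_ℓ`: the upper-left `ℓ × ℓ` block of an `(ℓ+m) × (ℓ+m)` matrix. -/
def blkL (K : Type*) [Semiring K] (ℓ m : ℕ) (M : Matrix (Fin (ℓ + m)) (Fin (ℓ + m)) K) :
    Matrix (Fin ℓ) (Fin ℓ) K :=
  Matrix.of fun i j => M (Fin.castAdd m i) (Fin.castAdd m j)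

/-- `π_m`: the lower-right `m × m` block of an `(ℓ+m) × (ℓ+m)` matrix. -/
def blkR (K : Type*) [Semiring K] (ℓ m : ℕ) (M : Matrix (Fin (ℓ + m)) (Fin (ℓ + m)) K) :
    Matrix (Fin m) (Fin m) K :=
  Matrix.of fun i j => M (Fin.natAdd ℓ i) (Fin.natAdd ℓ j)

/-- The block matrix `I_ℓ = [[1, 0], [0, 0]]` inside `M_{ℓ+m}(K)`. -/
def idL (K : Type*) [Semiring K] (ℓ m : ℕ) : Matrix (Fin (ℓ + m)) (Fin (ℓ + m)) K :=
  Matrix.of fun i j => if i = j ∧ (i : ℕ) < ℓ then 1 else 0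
section AuxBlocks

variable {K : Type*} [Field K] {ℓ m : ℕ}

lemma blkIdx_castAdd (i : Fin ℓ) : blkIdx ℓ m (Fin.castAdd m i) = 0 := by
  simp [blkIdx, i.isLt]

lemma blkIdx_natAdd (i : Fin m) : blkIdx ℓ m (Fin.natAdd ℓ i) = 1 := by
  simp [blkIdx]

lemma Eblk_lowleft {M : Matrix (Fin (ℓ + m)) (Fin (ℓ + m)) K} (hM : M ∈ Eblk K ℓ m)
    (i : Fin m) (j : Fin ℓ) : M (Fin.natAdd ℓ i) (Fin.castAdd m j) = 0 :=
  hM (by rw [blkIdx_castAdd, blkIdx_natAdd]; exact zero_lt_one)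

lemma blkL_mul {M N : Matrix (Fin (ℓ + m)) (Fin (ℓ + m)) K} (hN : N ∈ Eblk K ℓ m) :
    blkL K ℓ m (M * N) = blkL K ℓ m M * blkL K ℓ m N := by
  ext i j
  show (M * N) (Fin.castAdd m i) (Fin.castAdd m j) = _
  rw [Matrix.mul_apply, Fin.sum_univ_add]
  simp [blkL, Matrix.mul_apply, Eblk_lowleft hN]

lemma blkR_mul {M N : Matrix (Fin (ℓ + m)) (Fin (ℓ + m)) K} (hM : M ∈ Eblk K ℓ m) :
    blkR K ℓ m (M * N) = blkR K ℓ m M * blkR K ℓ m N := by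
  ext i j
  show (M * N) (Fin.natAdd ℓ i) (Fin.natAdd ℓ j) = _
  rw [Matrix.mul_apply, Fin.sum_univ_add]
  simp [blkR, Matrix.mul_apply, Eblk_lowleft hM]

lemma blkL_one : blkL K ℓ m 1 = 1 := by
  ext i j
  show (1 : Matrix (Fin (ℓ + m)) (Fin (ℓ + m)) K) _ _ = _
  rw [Matrix.one_apply, Matrix.one_apply]
  congr 1
  simp [Fin.ext_iff]

lemma blkR_one : blkR K ℓ m 1 = 1 := by
  ext i j
  show (1 : Matrix (Fin (ℓ + m)) (Fin (ℓ + m)) K) _ _ = _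
  rw [Matrix.one_apply, Matrix.one_apply]
  congr 1
  simp [Fin.ext_iff]

lemma mem_Tblk_of_blocks {M : Matrix (Fin (ℓ + m)) (Fin (ℓ + m)) K} (hM : M ∈ Eblk K ℓ m)
    (hL : blkL K ℓ m M = 0) (hR : blkR K ℓ m M = 0) : M ∈ Tblk K ℓ m := by
  intro i j hij
  rcases lt_or_ge (i : ℕ) ℓ with hi | hi
  · rcases lt_or_ge (j : ℕ) ℓ with hj | hj
    · have := congrFun (congrFun hL ⟨i, hi⟩) ⟨j, hj⟩
      simpa [blkL, Fin.castAdd, Fin.castLE, Fin.ext_iff] using this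
    · exact absurd ⟨hi, hj⟩ hij
  · rcases lt_or_ge (j : ℕ) ℓ with hj | hj
    · have h0 := Eblk_lowleft hM (⟨(i : ℕ) - ℓ, by omega⟩ : Fin m) (⟨j, hj⟩ : Fin ℓ)
      have hieq : Fin.natAdd ℓ (⟨(i : ℕ) - ℓ, by omega⟩ : Fin m) = i := by
        ext; simp [Fin.natAdd]; omega
      have hjeq : Fin.castAdd m (⟨(j : ℕ), hj⟩ : Fin ℓ) = j := by
        ext; simp [Fin.castAdd, Fin.castLE]
      rwa [hieq, hjeq] at h0
    · have := congrFun (congrFun hR ⟨(i : ℕ) - ℓ, by omega⟩) ⟨(j : ℕ) - ℓ, by omega⟩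
      have hieq : Fin.natAdd ℓ (⟨(i : ℕ) - ℓ, by omega⟩ : Fin m) = i := by
        ext; simp [Fin.natAdd]; omega
      have hjeq : Fin.natAdd ℓ (⟨(j : ℕ) - ℓ, by omega⟩ : Fin m) = j := by
        ext; simp [Fin.natAdd]; omega
      simpa [blkR, hieq, hjeq] using this

lemma Tblk_mul_eq_zero {M N : Matrix (Fin (ℓ + m)) (Fin (ℓ + m)) K}
    (hM : M ∈ Tblk K ℓ m) (hN : N ∈ Tblk K ℓ m) : M * N = 0 := by
  ext i j
  rw [Matrix.mul_apply]
  apply Finset.sum_eq_zero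
  intro t _
  rcases lt_or_ge (t : ℕ) ℓ with ht | ht
  · rw [hM i t (by omega), zero_mul]
  · rw [hN t j (by omega), mul_zero]

lemma Eblk_mul_Tblk {M N : Matrix (Fin (ℓ + m)) (Fin (ℓ + m)) K}
    (hM : M ∈ Eblk K ℓ m) (hN : N ∈ Tblk K ℓ m) : M * N ∈ Tblk K ℓ m := by
  intro i j hij
  rw [Matrix.mul_apply]
  apply Finset.sum_eq_zero
  intro t _
  rcases lt_or_ge (t : ℕ) ℓ with ht | ht
  · rcases lt_or_ge (j : ℕ) ℓ with hj | hj
    · rw [hN t j (by omega), mul_zero]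
    · -- j ≥ ℓ, so i ≥ ℓ from hij; M i t = 0 by triangularity
      have hi : ℓ ≤ (i : ℕ) := by omega
      rw [hM (show blkIdx ℓ m t < blkIdx ℓ m i by simp [blkIdx, ht, Nat.not_lt.mpr hi]), zero_mul]
  · rw [hN t j (by omega), mul_zero]

lemma Tblk_mul_Eblk {M N : Matrix (Fin (ℓ + m)) (Fin (ℓ + m)) K}
    (hM : M ∈ Tblk K ℓ m) (hN : N ∈ Eblk K ℓ m) : M * N ∈ Tblk K ℓ m := by
  intro i j hij
  rw [Matrix.mul_apply]
  apply Finset.sum_eq_zero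
  intro t _
  rcases lt_or_ge (t : ℕ) ℓ with ht | ht
  · rw [hM i t (by omega), zero_mul]
  · rcases lt_or_ge (i : ℕ) ℓ with hi | hi
    · -- i < ℓ, then j < ℓ from hij, N t j = 0 by triangularity
      have hj : (j : ℕ) < ℓ := by omega
      rw [hN (show blkIdx ℓ m j < blkIdx ℓ m t by simp [blkIdx, hj, Nat.not_lt.mpr ht]), mul_zero]
    · rw [hM i t (by omega), zero_mul]

end AuxBlocks
section AuxJac

/-- An element `x` such that every `y * x` squares to zero lies in the Jacobson radical. -/
lemma mem_jacobson_of_sq {R : Type*} [Ring R] {x : R}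
    (h : ∀ y : R, y * x * (y * x) = 0) : x ∈ (⊥ : Ideal R).jacobson := by
  rw [Ideal.mem_jacobson_iff]
  intro y
  refine ⟨1 - y * x, ?_⟩
  rw [Ideal.mem_bot]
  have h0 := h y
  have : (1 - y * x) * y * x + (1 - y * x) - 1 = -(y * x * (y * x)) := by noncomm_ring
  rw [this, h0, neg_zero]

/-- Any surjective ring hom onto a matrix ring over a field kills the Jacobson radical. -/
lemma jac_apply_eq_zero {R : Type*} [Ring R] {n : ℕ} {K : Type*} [Field K]
    (f : R →+* Matrix (Fin n) (Fin n) K) (hf : Function.Surjective f)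
    {x : R} (hx : x ∈ (⊥ : Ideal R).jacobson) : f x = 0 := by
  have key : ∀ v : Fin n → K, v ≠ 0 → f x *ᵥ v = 0 := by
    intro v hv
    set I : Ideal R :=
      { carrier := {r | f r *ᵥ v = 0}
        add_mem' := fun {a b} ha hb => by
          show f (a + b) *ᵥ v = 0
          rw [_root_.map_add, Matrix.add_mulVec, ha, hb, add_zero]
        zero_mem' := by show f 0 *ᵥ v = 0; rw [_root_.map_zero, Matrix.zero_mulVec]
        smul_mem' := fun c r hr => by
          show f (c * r) *ᵥ v = 0
          rw [_root_.map_mul, ← Matrix.mulVec_mulVec, hr, Matrix.mulVec_zero] } with hIdef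
    have hmemI : ∀ r : R, r ∈ I ↔ f r *ᵥ v = 0 := fun r => Iff.rfl
    have hImax : I.IsMaximal := by
      constructor; constructor
      · intro htop
        have h1 : (1 : R) ∈ I := htop ▸ Submodule.mem_top
        rw [hmemI, _root_.map_one, Matrix.one_mulVec] at h1
        exact hv h1
      · intro J hJ
        obtain ⟨x₀, hx₀J, hx₀I⟩ := SetLike.exists_of_lt hJ
        set u := f x₀ *ᵥ v with hu_def
        have hu : u ≠ 0 := fun h => hx₀I ((hmemI x₀).mpr h)
        obtain ⟨i1, hi1⟩ := Function.ne_iff.mp hu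
        rw [Ideal.eq_top_iff_one]
        set a : Matrix (Fin n) (Fin n) K :=
          Matrix.of fun p q => if q = i1 then v p * (u i1)⁻¹ else 0 with ha_def
        obtain ⟨r, hr⟩ := hf a
        have hav : a *ᵥ u = v := by
          ext p
          show (∑ q, a p q * u q) = v p
          rw [Finset.sum_eq_single i1]
          · show (if i1 = i1 then v p * (u i1)⁻¹ else 0) * u i1 = v p
            rw [if_pos rfl]
            rw [mul_assoc, inv_mul_cancel₀ hi1, mul_one]
          · intro q _ hq
            show (if q = i1 then v p * (u i1)⁻¹ else 0) * u q = 0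
            rw [if_neg hq, zero_mul]
          · intro habs; exact absurd (Finset.mem_univ i1) habs
        have hmem : (1 : R) - r * x₀ ∈ I := by
          rw [hmemI, _root_.map_sub, _root_.map_one, _root_.map_mul, hr, Matrix.sub_mulVec,
            ← Matrix.mulVec_mulVec, ← hu_def, hav, Matrix.one_mulVec, sub_self]
        have h1 : (1 : R) = (1 - r * x₀) + r * x₀ := by noncomm_ring
        rw [h1]
        exact J.add_mem (le_of_lt hJ hmem) (J.mul_mem_left r hx₀J)
    exact (Submodule.mem_sInf.mp hx) I ⟨bot_le, hImax⟩
  ext i j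
  have h := congrFun (key (Pi.single j 1) (fun h => by
    have := congrFun h j
    simp at this)) i
  rw [Matrix.mulVec_single] at h
  simpa using h

end AuxJac
section AuxSemisimple

variable (K : Type*) [Field K] (n : ℕ)

/-- The submodule of `M_n(K)` (as a left module over itself) of matrices supported
on column `j`. -/
def colMod (j : Fin n) : Submodule (Matrix (Fin n) (Fin n) K) (Matrix (Fin n) (Fin n) K) where
  carrier := {N | ∀ p q, q ≠ j → N p q = 0}
  add_mem' := fun {a b} ha hb p q hq => by
    show a p q + b p q = 0
    rw [ha p q hq, hb p q hq, add_zero]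
  zero_mem' := fun p q _ => rfl
  smul_mem' := fun c N hN p q hq => by
    show (c * N) p q = 0
    rw [Matrix.mul_apply]
    exact Finset.sum_eq_zero fun t _ => by rw [hN t q hq, mul_zero]

lemma colMod_isSimple (j : Fin n) :
    IsSimpleModule (Matrix (Fin n) (Fin n) K) (colMod K n j) := by
  rw [isSimpleModule_iff_isAtom]
  constructor
  · intro hbot
    have hmem : Matrix.single j j (1 : K) ∈ colMod K n j := by
      intro p q hq
      simp [Matrix.single, Ne.symm hq]
    rw [hbot] at hmem
    have : Matrix.single j j (1 : K) j j = 0 := by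
      rw [(Submodule.mem_bot _).mp hmem]; rfl
    simp [Matrix.single] at this
  · intro S hS
    by_contra hSne
    obtain ⟨x, hxS, hx0⟩ := Submodule.exists_mem_ne_zero_of_ne_bot hSne
    have hxcol : x ∈ colMod K n j := hS.le hxS
    obtain ⟨i0, hi0⟩ : ∃ i0, x i0 j ≠ 0 := by
      by_contra hall
      push_neg at hall
      apply hx0
      ext p q
      by_cases hq : q = j
      · subst hq; exact hall p
      · exact hxcol p q hq
    have hle : colMod K n j ≤ S := by
      intro y hy
      have hyx : y = (Matrix.of fun p t => if t = i0 then y p j * (x i0 j)⁻¹ else 0) • x := by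
        ext p q
        show y p q = ∑ t, (if t = i0 then y p j * (x i0 j)⁻¹ else 0) * x t q
        rw [Finset.sum_eq_single i0]
        · rw [if_pos rfl]
          by_cases hq : q = j
          · subst hq
            rw [mul_assoc, inv_mul_cancel₀ hi0, mul_one]
          · rw [hxcol i0 q hq, mul_zero, hy p q hq]
        · intro t _ ht; rw [if_neg ht, zero_mul]
        · intro habs; exact absurd (Finset.mem_univ i0) habs
      rw [hyx]
      exact S.smul_mem _ hxS
    exact hS.not_ge hle

lemma matrix_isSemisimpleRing : IsSemisimpleRing (Matrix (Fin n) (Fin n) K) := by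
  apply IsSemisimpleModule.of_sSup_simples_eq_top
  rw [eq_top_iff]
  rintro M -
  have hdecomp : M = ∑ j : Fin n, M * Matrix.single j j (1 : K) := by
    ext p q
    rw [Matrix.sum_apply]
    rw [Finset.sum_eq_single q]
    · rw [Matrix.mul_apply, Finset.sum_eq_single q]
      · simp [Matrix.single]
      · intro t _ ht
        simp [Matrix.single, Ne.symm ht]
      · intro habs; exact absurd (Finset.mem_univ q) habs
    · intro t _ ht
      rw [Matrix.mul_apply]
      exact Finset.sum_eq_zero fun s _ => by simp [Matrix.single, ht]
    · intro habs; exact absurd (Finset.mem_univ q) habs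
  rw [hdecomp]
  apply Submodule.sum_mem
  intro j _
  have hmem : M * Matrix.single j j (1 : K) ∈ colMod K n j := by
    intro p q hq
    rw [Matrix.mul_apply]
    exact Finset.sum_eq_zero fun s _ => by simp [Matrix.single, Ne.symm hq]
  have hl : colMod K n j ≤ sSup {S : Submodule (Matrix (Fin n) (Fin n) K) (Matrix (Fin n) (Fin n) K) | IsSimpleModule (Matrix (Fin n) (Fin n) K) S} :=
    le_sSup (colMod_isSimple K n j)
  exact hl hmem

end AuxSemisimple
section AuxSandwich

variable {K : Type*} [Field K] {ℓ m : ℕ}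

@[simp] lemma natAdd_inj' {a b : Fin m} : Fin.natAdd ℓ a = Fin.natAdd ℓ b ↔ a = b := by
  simp [Fin.ext_iff]

lemma Eblk_mul_Tblk_apply {P x : Matrix (Fin (ℓ + m)) (Fin (ℓ + m)) K}
    (hx : x ∈ Tblk K ℓ m) (i' : Fin ℓ) (j : Fin (ℓ + m)) :
    (P * x) (Fin.castAdd m i') j = ∑ t : Fin ℓ, blkL K ℓ m P i' t * x (Fin.castAdd m t) j := by
  rw [Matrix.mul_apply, Fin.sum_univ_add]
  have h2 : ∀ t : Fin m, P (Fin.castAdd m i') (Fin.natAdd ℓ t) * x (Fin.natAdd ℓ t) j = 0 := by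
    intro t
    rw [hx (Fin.natAdd ℓ t) j (by simp), mul_zero]
  simp only [h2, Finset.sum_const_zero, add_zero]
  rfl

lemma Tblk_mul_Eblk_apply {x Q : Matrix (Fin (ℓ + m)) (Fin (ℓ + m)) K}
    (hx : x ∈ Tblk K ℓ m) (i : Fin (ℓ + m)) (j' : Fin m) :
    (x * Q) i (Fin.natAdd ℓ j') = ∑ t : Fin m, x i (Fin.natAdd ℓ t) * blkR K ℓ m Q t j' := by
  rw [Matrix.mul_apply, Fin.sum_univ_add]
  have h1 : ∀ t : Fin ℓ, x i (Fin.castAdd m t) * Q (Fin.castAdd m t) (Fin.natAdd ℓ j') = 0 := by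
    intro t
    rw [hx i (Fin.castAdd m t) (by simp), zero_mul]
  simp only [h1, Finset.sum_const_zero, zero_add]
  rfl

lemma sandwich {P x Q : Matrix (Fin (ℓ + m)) (Fin (ℓ + m)) K}
    (hP : P ∈ Eblk K ℓ m) (hx : x ∈ Tblk K ℓ m) (hQ : Q ∈ Eblk K ℓ m)
    {p i0' : Fin ℓ} {α : K} (hPL : blkL K ℓ m P = Matrix.single p i0' α)
    {j0' q : Fin m} {β : K} (hQR : blkR K ℓ m Q = Matrix.single j0' q β) :
    P * x * Q = Matrix.single (Fin.castAdd m p) (Fin.natAdd ℓ q)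
      (α * x (Fin.castAdd m i0') (Fin.natAdd ℓ j0') * β) := by
  have hPx : P * x ∈ Tblk K ℓ m := Eblk_mul_Tblk hP hx
  have hPxQ : P * x * Q ∈ Tblk K ℓ m := Tblk_mul_Eblk hPx hQ
  have hPxapp : ∀ (i' : Fin ℓ) (j : Fin (ℓ + m)), (P * x) (Fin.castAdd m i') j
      = if p = i' then α * x (Fin.castAdd m i0') j else 0 := by
    intro i' j
    rw [Eblk_mul_Tblk_apply hx, hPL]
    simp [Matrix.single, ite_and, ite_mul, zero_mul]
  ext i j
  rcases lt_or_ge (i : ℕ) ℓ with hi | hi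
  · rcases lt_or_ge (j : ℕ) ℓ with hj | hj
    · rw [hPxQ i j (by omega), Matrix.single]
      simp only [Matrix.of_apply]
      rw [if_neg]
      rintro ⟨-, h2⟩
      have := congrArg Fin.val h2
      simp [Fin.natAdd] at this
      omega
    · -- i < ℓ, j ≥ ℓ : in the block
      obtain ⟨i', rfl⟩ : ∃ i' : Fin ℓ, i = Fin.castAdd m i' := ⟨⟨(i:ℕ), hi⟩, by ext; rfl⟩
      obtain ⟨j', rfl⟩ : ∃ j' : Fin m, j = Fin.natAdd ℓ j' :=
        ⟨⟨(j:ℕ) - ℓ, by omega⟩, by ext; simp; omega⟩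
      rw [Tblk_mul_Eblk_apply hPx, hQR]
      simp only [hPxapp, Matrix.single, Matrix.of_apply]
      by_cases hpi : p = i' <;> by_cases hqj : q = j' <;>
        simp [hpi, hqj, ite_and, ite_mul, zero_mul, mul_ite, mul_zero, Finset.sum_ite_eq]
  · rw [hPxQ i j (by omega), Matrix.single]
    simp only [Matrix.of_apply]
    rw [if_neg]
    rintro ⟨h1, -⟩
    have := congrArg Fin.val h1
    simp [Fin.castAdd, Fin.castLE] at this
    omega

lemma Tblk_eq_sum {N : Matrix (Fin (ℓ + m)) (Fin (ℓ + m)) K} (hN : N ∈ Tblk K ℓ m) :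
    N = ∑ p : Fin ℓ, ∑ q : Fin m, N (Fin.castAdd m p) (Fin.natAdd ℓ q) •
      Matrix.single (Fin.castAdd m p) (Fin.natAdd ℓ q) (1 : K) := by
  ext i j
  rw [Matrix.sum_apply]
  simp only [Matrix.sum_apply, Matrix.smul_apply, Matrix.single, Matrix.of_apply,
    smul_eq_mul, mul_ite, mul_one, mul_zero]
  rcases lt_or_ge (i : ℕ) ℓ with hi | hi
  · rcases lt_or_ge (j : ℕ) ℓ with hj | hj
    · rw [hN i j (by omega)]
      apply (Finset.sum_eq_zero _).symm
      intro p _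
      apply Finset.sum_eq_zero
      intro q _
      rw [if_neg]
      rintro ⟨-, h2⟩
      have := congrArg Fin.val h2
      simp [Fin.natAdd] at this
      omega
    · obtain ⟨i', rfl⟩ : ∃ i' : Fin ℓ, i = Fin.castAdd m i' := ⟨⟨(i:ℕ), hi⟩, by ext; rfl⟩
      obtain ⟨j', rfl⟩ : ∃ j' : Fin m, j = Fin.natAdd ℓ j' :=
        ⟨⟨(j:ℕ) - ℓ, by omega⟩, by ext; simp; omega⟩
      rw [Finset.sum_eq_single i']
      · rw [Finset.sum_eq_single j']
        · rw [if_pos ⟨rfl, rfl⟩]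
        · intro b _ hb
          rw [if_neg]
          rintro ⟨-, h2⟩
          exact hb (by simpa using h2)
        · intro habs; exact absurd (Finset.mem_univ j') habs
      · intro b _ hb
        apply Finset.sum_eq_zero
        intro q _
        rw [if_neg]
        rintro ⟨h1, -⟩
        exact hb (by simpa using h1)
      · intro habs; exact absurd (Finset.mem_univ i') habs
  · rw [hN i j (by omega)]
    apply (Finset.sum_eq_zero _).symm
    intro p _
    apply Finset.sum_eq_zero
    intro q _
    rw [if_neg]
    rintro ⟨h1, -⟩
    have := congrArg Fin.val h1
    simp [Fin.castAdd, Fin.castLE] at this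
    omega

end AuxSandwich
section AuxProj

variable (K : Type*) [Field K] (ℓ m : ℕ)

/-- `blkL` as a `K`-algebra homomorphism on a subalgebra of block upper triangular matrices. -/
def piL (Λ : Subalgebra K (Matrix (Fin (ℓ + m)) (Fin (ℓ + m)) K)) (hle : Λ ≤ Eblk K ℓ m) :
    Λ →ₐ[K] Matrix (Fin ℓ) (Fin ℓ) K where
  toFun := fun x => blkL K ℓ m (x : Matrix (Fin (ℓ + m)) (Fin (ℓ + m)) K)
  map_one' := by
    show blkL K ℓ m ((1 : Λ) : Matrix (Fin (ℓ + m)) (Fin (ℓ + m)) K) = 1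
    rw [Subalgebra.coe_one, blkL_one]
  map_mul' := fun x y => by
    show blkL K ℓ m ((x * y : Λ) : Matrix (Fin (ℓ + m)) (Fin (ℓ + m)) K) = _
    rw [MulMemClass.coe_mul, blkL_mul (hle y.2)]
  map_zero' := by ext i j; rfl
  map_add' := fun x y => by ext i j; rfl
  commutes' := fun c => by
    ext i j
    show (algebraMap K (Matrix (Fin (ℓ + m)) (Fin (ℓ + m)) K) c)
      (Fin.castAdd m i) (Fin.castAdd m j) = _
    rw [Matrix.algebraMap_matrix_apply, Matrix.algebraMap_matrix_apply]
    by_cases h : i = j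
    · rw [if_pos h, if_pos (by rw [h])]
    · rw [if_neg h, if_neg (by simpa using h)]

/-- `blkR` as a `K`-algebra homomorphism on a subalgebra of block upper triangular matrices. -/
def piR (Λ : Subalgebra K (Matrix (Fin (ℓ + m)) (Fin (ℓ + m)) K)) (hle : Λ ≤ Eblk K ℓ m) :
    Λ →ₐ[K] Matrix (Fin m) (Fin m) K where
  toFun := fun x => blkR K ℓ m (x : Matrix (Fin (ℓ + m)) (Fin (ℓ + m)) K)
  map_one' := by
    show blkR K ℓ m ((1 : Λ) : Matrix (Fin (ℓ + m)) (Fin (ℓ + m)) K) = 1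
    rw [Subalgebra.coe_one, blkR_one]
  map_mul' := fun x y => by
    show blkR K ℓ m ((x * y : Λ) : Matrix (Fin (ℓ + m)) (Fin (ℓ + m)) K) = _
    rw [MulMemClass.coe_mul, blkR_mul (hle x.2)]
  map_zero' := by ext i j; rfl
  map_add' := fun x y => by ext i j; rfl
  commutes' := fun c => by
    ext i j
    show (algebraMap K (Matrix (Fin (ℓ + m)) (Fin (ℓ + m)) K) c)
      (Fin.natAdd ℓ i) (Fin.natAdd ℓ j) = _
    rw [Matrix.algebraMap_matrix_apply, Matrix.algebraMap_matrix_apply]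
    by_cases h : i = j
    · rw [if_pos h, if_pos (by rw [h])]
    · rw [if_neg h, if_neg (by simpa using h)]

@[simp] lemma piL_apply (Λ : Subalgebra K (Matrix (Fin (ℓ + m)) (Fin (ℓ + m)) K))
    (hle : Λ ≤ Eblk K ℓ m) (x : Λ) :
    piL K ℓ m Λ hle x = blkL K ℓ m (x : Matrix (Fin (ℓ + m)) (Fin (ℓ + m)) K) := rfl

@[simp] lemma piR_apply (Λ : Subalgebra K (Matrix (Fin (ℓ + m)) (Fin (ℓ + m)) K))
    (hle : Λ ≤ Eblk K ℓ m) (x : Λ) :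
    piR K ℓ m Λ hle x = blkR K ℓ m (x : Matrix (Fin (ℓ + m)) (Fin (ℓ + m)) K) := rfl

end AuxProj
set_option maxHeartbeats 1000000 in
set_option synthInstance.maxHeartbeats 400000 in
/-- For a nonsplit `(ℓ,m)`-extension of irreducible representations `ρ`,
the Jacobson radical of `Λ = Kρ(A)` is exactly `T_{(ℓ,m)}(K)`. -/
theorem stmt2 (k K : Type*) [Field k] [Field K] [Algebra k K]
    (A : Type*) [Ring A] [Algebra k A] (ℓ m : ℕ) (hℓ : 0 < ℓ) (hm : 0 < m)
    (ρ : A →ₐ[k] Matrix (Fin (ℓ + m)) (Fin (ℓ + m)) K)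
    (hE : ∀ a, ρ a ∈ Eblk K ℓ m)
    (hirrL : Algebra.adjoin K (Set.range fun a => blkL K ℓ m (ρ a)) = ⊤)
    (hirrR : Algebra.adjoin K (Set.range fun a => blkR K ℓ m (ρ a)) = ⊤)
    (Λ : Subalgebra K (Matrix (Fin (ℓ + m)) (Fin (ℓ + m)) K))
    (hΛ : Λ = Algebra.adjoin K (Set.range ρ))
    (hnonsplit : ¬ IsSemisimpleRing Λ) :
    Subtype.val '' (((⊥ : Ideal Λ).jacobson : Set Λ)) = Tblk K ℓ m := by
  classical
  have hΛle : Λ ≤ Eblk K ℓ m := by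
    rw [hΛ]
    exact Algebra.adjoin_le (by rintro _ ⟨a, rfl⟩; exact hE a)
  have hΛE : ∀ x : Λ, (x : Matrix (Fin (ℓ + m)) (Fin (ℓ + m)) K) ∈ Eblk K ℓ m :=
    fun x => hΛle x.2
  let πL := piL K ℓ m Λ hΛle
  let πR := piR K ℓ m Λ hΛle
  have hπL : ∀ x : Λ, πL x = blkL K ℓ m (x : Matrix (Fin (ℓ + m)) (Fin (ℓ + m)) K) :=
    fun x => rfl
  have hπR : ∀ x : Λ, πR x = blkR K ℓ m (x : Matrix (Fin (ℓ + m)) (Fin (ℓ + m)) K) :=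
    fun x => rfl
  -- the two block projections as `K`-algebra homomorphisms on `Λ`
  have hsurjL : Function.Surjective πL := by
    intro a
    have hle : (⊤ : Subalgebra K (Matrix (Fin ℓ) (Fin ℓ) K)) ≤ πL.range := by
      rw [← hirrL]
      apply Algebra.adjoin_le
      rintro _ ⟨a', rfl⟩
      exact ⟨⟨ρ a', by rw [hΛ]; exact Algebra.subset_adjoin ⟨a', rfl⟩⟩, rfl⟩
    exact hle (Algebra.mem_top : a ∈ ⊤)
  have hsurjR : Function.Surjective πR := by
    intro a
    have hle : (⊤ : Subalgebra K (Matrix (Fin m) (Fin m) K)) ≤ πR.range := by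
      rw [← hirrR]
      apply Algebra.adjoin_le
      rintro _ ⟨a', rfl⟩
      exact ⟨⟨ρ a', by rw [hΛ]; exact Algebra.subset_adjoin ⟨a', rfl⟩⟩, rfl⟩
    exact hle (Algebra.mem_top : a ∈ ⊤)
  -- characterization of the Jacobson radical of `Λ`
  have hjac : ∀ x : Λ, x ∈ (⊥ : Ideal Λ).jacobson ↔
      (x : Matrix (Fin (ℓ + m)) (Fin (ℓ + m)) K) ∈ Tblk K ℓ m := by
    intro x
    constructor
    · intro hx
      exact mem_Tblk_of_blocks (hΛE x)
        (jac_apply_eq_zero πL.toRingHom hsurjL hx)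
        (jac_apply_eq_zero πR.toRingHom hsurjR hx)
    · intro hx
      apply mem_jacobson_of_sq
      intro y
      have h1 : ((y * x : Λ) : Matrix (Fin (ℓ + m)) (Fin (ℓ + m)) K) ∈ Tblk K ℓ m := by
        rw [MulMemClass.coe_mul]
        exact Eblk_mul_Tblk (hΛE y) hx
      apply Subtype.ext
      show ((y * x : Λ) : Matrix (Fin (ℓ + m)) (Fin (ℓ + m)) K) *
        ((y * x : Λ) : Matrix (Fin (ℓ + m)) (Fin (ℓ + m)) K) = 0
      exact Tblk_mul_eq_zero h1 h1
  -- there is a nonzero element of `Λ` lying in `T`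
  have hexists : ∃ x : Λ, (x : Matrix (Fin (ℓ + m)) (Fin (ℓ + m)) K) ∈ Tblk K ℓ m ∧ x ≠ 0 := by
    by_contra hno
    push_neg at hno
    apply hnonsplit
    haveI : Nonempty (Fin ℓ) := ⟨⟨0, hℓ⟩⟩
    haveI : Nonempty (Fin m) := ⟨⟨0, hm⟩⟩
    haveI := matrix_isSemisimpleRing K ℓ
    haveI := matrix_isSemisimpleRing K m
    let φ : Λ →+* Matrix (Fin ℓ) (Fin ℓ) K × Matrix (Fin m) (Fin m) K :=
      (πL.toRingHom).prod (πR.toRingHom)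
    have hφ : ∀ x : Λ, φ x = (πL x, πR x) := fun x => rfl
    have hφinj : Function.Injective φ := by
      rw [injective_iff_map_eq_zero]
      intro x hx
      have hL : πL x = 0 := congrArg Prod.fst hx
      have hR : πR x = 0 := congrArg Prod.snd hx
      exact hno x (mem_Tblk_of_blocks (hΛE x) hL hR)
    by_cases hc : ∃ c : Matrix (Fin m) (Fin m) K, c ≠ 0 ∧ ((0 : Matrix (Fin ℓ) (Fin ℓ) K), c) ∈ φ.range
    · -- the second-factor kernel-complement is a nonzero two-sided ideal, hence everything;
      -- so `φ` is surjective
      obtain ⟨c₀, hc₀ne, hc₀mem⟩ := hc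
      have hrange : ∀ c : Matrix (Fin m) (Fin m) K,
          ((0 : Matrix (Fin ℓ) (Fin ℓ) K), c) ∈ φ.range := by
        set N : TwoSidedIdeal (Matrix (Fin m) (Fin m) K) := TwoSidedIdeal.mk'
          {c | ((0 : Matrix (Fin ℓ) (Fin ℓ) K), c) ∈ φ.range}
          (show ((0 : Matrix (Fin ℓ) (Fin ℓ) K), (0 : Matrix (Fin m) (Fin m) K)) ∈ φ.range from ⟨0, by rw [_root_.map_zero]; rfl⟩)
          (by
            rintro x y ⟨u, hu⟩ ⟨v, hv⟩
            exact ⟨u + v, by rw [_root_.map_add, hu, hv, Prod.mk_add_mk, add_zero]⟩)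
          (by
            rintro x ⟨u, hu⟩
            exact ⟨-u, by rw [_root_.map_neg, hu, Prod.neg_mk, neg_zero]⟩)
          (by
            rintro x y ⟨u, hu⟩
            obtain ⟨w, hw⟩ := hsurjR x
            exact ⟨w * u, by rw [_root_.map_mul, hu, hφ w, Prod.mk_mul_mk, mul_zero, hw]⟩)
          (by
            rintro x y ⟨u, hu⟩
            obtain ⟨w, hw⟩ := hsurjR y
            exact ⟨u * w, by rw [_root_.map_mul, hu, hφ w, Prod.mk_mul_mk, zero_mul, hw]⟩)
          with hNdef
        have hNmem : ∀ c : Matrix (Fin m) (Fin m) K,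
            c ∈ N ↔ ((0 : Matrix (Fin ℓ) (Fin ℓ) K), c) ∈ φ.range := fun c =>
          TwoSidedIdeal.mem_mk' _ _ _ _ _ _ c
        have hNne : N ≠ ⊥ := fun h => hc₀ne ((TwoSidedIdeal.mem_bot _).mp (h ▸ (hNmem c₀).mpr hc₀mem))
        have hNtop : N = ⊤ := (eq_bot_or_eq_top N).resolve_left hNne
        intro c
        exact (hNmem c).mp (hNtop ▸ TwoSidedIdeal.mem_top _)
      have hφsurj : Function.Surjective φ := by
        rintro ⟨a, c⟩
        obtain ⟨x, hx⟩ := hsurjL a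
        obtain ⟨y, hy⟩ := hrange (c - πR x)
        refine ⟨x + y, ?_⟩
        rw [_root_.map_add, hy, hφ x, hx, Prod.mk_add_mk, add_zero, add_sub_cancel]
      exact ((RingEquiv.ofBijective φ ⟨hφinj, hφsurj⟩).symm).isSemisimpleRing
    · push_neg at hc
      have hinj : Function.Injective πL.toRingHom := by
        rw [injective_iff_map_eq_zero]
        intro x hx0
        by_contra hxne
        have hcmem : ((0 : Matrix (Fin ℓ) (Fin ℓ) K), πR x) ∈ φ.range :=
          ⟨x, by rw [hφ x, show πL x = 0 from hx0]⟩
        have hcne : πR x ≠ 0 := fun h =>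
          hxne (hno x (mem_Tblk_of_blocks (hΛE x) hx0 h))
        exact hc (πR x) hcne hcmem
      exact ((RingEquiv.ofBijective πL.toRingHom ⟨hinj, hsurjL⟩).symm).isSemisimpleRing
  -- use the nonzero element to show `T ⊆ Λ`
  obtain ⟨x, hxT, hxne⟩ := hexists
  obtain ⟨i0, j0, hx0⟩ : ∃ i0 j0, (x : Matrix (Fin (ℓ + m)) (Fin (ℓ + m)) K) i0 j0 ≠ 0 := by
    by_contra hall
    push_neg at hall
    exact hxne (Subtype.ext (by ext i j; rw [hall i j]; rfl))
  have hblk : (i0 : ℕ) < ℓ ∧ ℓ ≤ (j0 : ℕ) := by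
    by_contra h
    exact hx0 (hxT i0 j0 h)
  have hstd : ∀ (p : Fin ℓ) (q : Fin m),
      Matrix.single (Fin.castAdd m p) (Fin.natAdd ℓ q) (1 : K) ∈ Λ := by
    intro p q
    set i0' : Fin ℓ := ⟨(i0 : ℕ), hblk.1⟩ with hi0'def
    set j0' : Fin m := ⟨(j0 : ℕ) - ℓ, by omega⟩ with hj0'def
    have hi0eq : Fin.castAdd m i0' = i0 := by ext; rfl
    have hj0eq : Fin.natAdd ℓ j0' = j0 := by ext; simp [hj0'def]; omega
    obtain ⟨lam, hlam⟩ := hsurjL (Matrix.single p i0'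
      (((x : Matrix (Fin (ℓ + m)) (Fin (ℓ + m)) K) i0 j0)⁻¹))
    obtain ⟨mu, hmu⟩ := hsurjR (Matrix.single j0' q (1 : K))
    have key : ((lam * x * mu : Λ) : Matrix (Fin (ℓ + m)) (Fin (ℓ + m)) K)
        = Matrix.single (Fin.castAdd m p) (Fin.natAdd ℓ q) (1 : K) := by
      rw [MulMemClass.coe_mul, MulMemClass.coe_mul]
      rw [sandwich (hΛE lam) hxT (hΛE mu) hlam hmu]
      rw [hi0eq, hj0eq, inv_mul_cancel₀ hx0, one_mul]
    rw [← key]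
    exact (lam * x * mu).2
  have hTsub : Tblk K ℓ m ⊆ (Λ : Set (Matrix (Fin (ℓ + m)) (Fin (ℓ + m)) K)) := by
    intro N hN
    rw [Tblk_eq_sum hN]
    apply Subalgebra.sum_mem
    intro p _
    apply Subalgebra.sum_mem
    intro q _
    exact Λ.smul_mem (hstd p q) _
  -- conclude
  ext M
  constructor
  · rintro ⟨x', hx', rfl⟩
    exact (hjac x').mp hx'
  · intro hM
    exact ⟨⟨M, hTsub hM⟩, (hjac _).mpr hM, rfl⟩
end
end

section
/- Let k be a field, K a field extension of k, A a k-algebra, and ℓ, m positive integers. If ρ : A → E_{(ℓ,m)}(K) is a nonsplit (ℓ,m)-extension of irreducible representations that is not a self extension, then Kρ(A) = E_{(ℓ,m)}(K). -/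
open Matrix

noncomputable section

/-! The images of `Kρ(A)` under the two diagonal block projections are the full matrix
algebras, so by a Goursat argument its image in `M_ℓ(K) × M_m(K)` is either everything or the
graph of an isomorphism `M_ℓ(K) ≅ M_m(K)`. Such an isomorphism is inner (Skolem–Noether),
which would make `ρ` a self extension. Hence `Kρ(A)` maps onto `M_ℓ(K) × M_m(K)`, and as it is
not semisimple the kernel of this map, its intersection with the corner `[[0, *], [0, 0]]`, is
nonzero. That kernel is an `M_ℓ(K)`-`M_m(K)` sub-bimodule of `M_{ℓ×m}(K)`, hence all of it,
and so `Kρ(A) = E_{(ℓ,m)}(K)`. -/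

theorem Subalgebra.exists_algEquiv_of_prod_injective {R A B : Type*} [CommRing R] [Ring A]
    [Ring B] [Algebra R A] [Algebra R B] (C : Subalgebra R (A × B))
    (hfst : ∀ x, ∃ y, (x, y) ∈ C) (hsnd : ∀ y, ∃ x, (x, y) ∈ C)
    (h₁ : ∀ ⦃x⦄, (x, 0) ∈ C → x = 0) (h₂ : ∀ ⦃y⦄, (0, y) ∈ C → y = 0) :
    ∃ e : A ≃ₐ[R] B, ∀ z ∈ C, z.2 = e z.1 := by
  let f₁ : C →ₐ[R] A := (AlgHom.fst R A B).comp C.val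
  let f₂ : C →ₐ[R] B := (AlgHom.snd R A B).comp C.val
  have hf₁ : Function.Bijective f₁ := by
    refine ⟨(injective_iff_map_eq_zero f₁).2 ?_, fun x => ?_⟩
    · rintro ⟨⟨x, y⟩, hxy⟩ (rfl : x = 0)
      exact Subtype.ext (Prod.ext rfl (h₂ hxy))
    · obtain ⟨y, hy⟩ := hfst x
      exact ⟨⟨_, hy⟩, rfl⟩
  have hf₂ : Function.Bijective f₂ := by
    refine ⟨(injective_iff_map_eq_zero f₂).2 ?_, fun y => ?_⟩
    · rintro ⟨⟨x, y⟩, hxy⟩ (rfl : y = 0)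
      exact Subtype.ext (Prod.ext (h₁ hxy) rfl)
    · obtain ⟨x, hx⟩ := hsnd y
      exact ⟨⟨_, hx⟩, rfl⟩
  refine ⟨(AlgEquiv.ofBijective f₁ hf₁).symm.trans (AlgEquiv.ofBijective f₂ hf₂),
    fun z hz => ?_⟩
  have hz : (AlgEquiv.ofBijective f₁ hf₁).symm z.1 = ⟨z, hz⟩ :=
    (AlgEquiv.symm_apply_eq _).2 rfl
  rw [AlgEquiv.trans_apply, hz]
  rfl

namespace Matrix

variable {K : Type*} [Field K]

theorem submodule_eq_bot_or_eq_top_of_mul_mul_mem {p q : Type*} [Fintype p] [Fintype q]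
    [DecidableEq p] [DecidableEq q] (S : Submodule K (Matrix p q K))
    (hS : ∀ (x : Matrix p p K) (s : Matrix p q K) (y : Matrix q q K),
      s ∈ S → x * s * y ∈ S) :
    S = ⊥ ∨ S = ⊤ := by
  refine or_iff_not_imp_left.2 fun hne => ?_
  obtain ⟨s, hs, hs0⟩ := (Submodule.ne_bot_iff S).1 hne
  obtain ⟨i₀, j₀, hij⟩ : ∃ i j, s i j ≠ 0 := by
    by_contra! h
    exact hs0 (Matrix.ext h)
  have hsingle : ∀ i j c, single i j c ∈ S := fun i j c => by
    have := hS (single i i₀ (c * (s i₀ j₀)⁻¹)) s (single j₀ j 1) hs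
    rwa [single_mul_mul_single, mul_one, inv_mul_cancel_right₀ hij] at this
  exact eq_top_iff.2 fun M _ => M.induction_on' S.zero_mem (fun _ _ => S.add_mem) hsingle

variable {n : Type*} [Fintype n] [DecidableEq n]

theorem algHom_mul_sum_eq_sum_mul (e : Matrix n n K →ₐ[K] Matrix n n K) (i₀ : n)
    (N x : Matrix n n K) :
    e x * ∑ j, e (single j i₀ 1) * N * single i₀ j 1
      = (∑ j, e (single j i₀ 1) * N * single i₀ j 1) * x := by
  -- both sides send `single a b c` to `c • e (single a i₀ 1) * N * single i₀ b 1`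
  induction x using Matrix.induction_on' with
  | h_zero => simp
  | h_add x y hx hy => rw [map_add, add_mul, mul_add, hx, hy]
  | h_std_basis a b c =>
    have hsingle : ∀ i j : n, single i j c = c • single i j 1 := fun i j => by
      rw [smul_single, smul_eq_mul, mul_one]
    rw [Finset.mul_sum, Finset.sum_mul, Finset.sum_eq_single b, Finset.sum_eq_single a]
    · rw [← mul_assoc, ← mul_assoc, ← map_mul, single_mul_single_same, mul_one,
        mul_assoc _ (single i₀ a 1), single_mul_single_same, one_mul, hsingle a i₀,
        hsingle i₀ b, map_smul, smul_mul_assoc, smul_mul_assoc, mul_smul_comm]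
    · intro j _ hj
      rw [mul_assoc, single_mul_single_of_ne _ _ _ _ hj, mul_zero]
    · simp
    · intro j _ hj
      rw [← mul_assoc, ← mul_assoc, ← map_mul, single_mul_single_of_ne _ _ _ _ (Ne.symm hj),
        map_zero, zero_mul, zero_mul]
    · simp

theorem isUnit_of_algHom_mul_eq_mul (e : Matrix n n K →ₐ[K] Matrix n n K) {Q : Matrix n n K}
    (hQ : ∀ x, e x * Q = Q * x) (hQ₀ : Q ≠ 0) : IsUnit Q := by
  rw [isUnit_iff_isUnit_det, isUnit_iff_ne_zero]
  intro hdet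
  obtain ⟨u, hu0, hu⟩ := exists_mulVec_eq_zero_iff.2 hdet
  obtain ⟨j, hj⟩ : ∃ j, u j ≠ 0 := by
    by_contra! h
    exact hu0 (funext h)
  refine hQ₀ (ext_of_mulVec_single fun i => ?_)
  have hi : single i j (u j)⁻¹ *ᵥ u = Pi.single i 1 := by
    rw [single_mulVec_eq, inv_mul_cancel₀ hj, one_smul]
  rw [← hi, mulVec_mulVec, ← hQ, ← mulVec_mulVec, hu, mulVec_zero, zero_mulVec]

theorem exists_isUnit_algEquiv_mul_eq_mul (e : Matrix n n K ≃ₐ[K] Matrix n n K) :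
    ∃ Q : Matrix n n K, IsUnit Q ∧ ∀ x, e x * Q = Q * x := by
  rcases isEmpty_or_nonempty n with _ | ⟨⟨i₀⟩⟩
  · exact ⟨1, isUnit_one, fun _ => Subsingleton.elim _ _⟩
  obtain ⟨r, t, hrt⟩ : ∃ r t, e (single i₀ i₀ 1) r t ≠ 0 := by
    by_contra! h
    have h0 := e.injective ((Matrix.ext h).trans (map_zero e).symm)
    simpa using congrFun₂ h0 i₀ i₀
  obtain ⟨Q, hQ, hQ₀⟩ : ∃ Q : Matrix n n K,
      (∀ x, e x * Q = Q * x) ∧ Q r i₀ ≠ 0 := by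
    refine ⟨_, algHom_mul_sum_eq_sum_mul e.toAlgHom i₀ (single t i₀ 1), ?_⟩
    rwa [Matrix.sum_apply, Finset.sum_eq_single i₀
      (fun j _ hj => mul_single_apply_of_ne _ _ _ _ _ (Ne.symm hj) _) (by simp),
      mul_single_apply_same, mul_single_apply_same, mul_one, mul_one]
  exact ⟨Q, isUnit_of_algHom_mul_eq_mul e.toAlgHom hQ fun h => hQ₀ (by rw [h, zero_apply]),
    hQ⟩

theorem exists_conj_of_algEquiv {ℓ m : ℕ}
    (e : Matrix (Fin ℓ) (Fin ℓ) K ≃ₐ[K] Matrix (Fin m) (Fin m) K) :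
    ∃ (h : ℓ = m) (Q₀ : Matrix (Fin m) (Fin m) K), IsUnit Q₀ ∧
      ∀ x, e x = Q₀⁻¹ * x.submatrix (Fin.cast h.symm) (Fin.cast h.symm) * Q₀ := by
  have hdim : ℓ * ℓ = m * m := by
    simpa [Module.finrank_matrix] using e.toLinearEquiv.finrank_eq
  obtain rfl := Nat.mul_self_inj.1 hdim
  obtain ⟨Q, hQ, hQe⟩ := exists_isUnit_algEquiv_mul_eq_mul e
  have hdet : IsUnit Q.det := (isUnit_iff_isUnit_det Q).1 hQ
  refine ⟨rfl, Q⁻¹, (isUnit_nonsing_inv_iff).2 hQ, fun x => ?_⟩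
  rw [nonsing_inv_nonsing_inv Q hdet, ← hQe, mul_nonsing_inv_cancel_right _ _ hdet]
  rfl

theorem subalgebra_prod_eq_top_or_exists_algEquiv {p q : Type*} [Fintype p] [DecidableEq p]
    [Fintype q] [DecidableEq q] (C : Subalgebra K (Matrix p p K × Matrix q q K))
    (hfst : ∀ x, ∃ y, (x, y) ∈ C) (hsnd : ∀ y, ∃ x, (x, y) ∈ C) :
    C = ⊤ ∨ ∃ e : Matrix p p K ≃ₐ[K] Matrix q q K, ∀ z ∈ C, z.2 = e z.1 := by
  have hI₁ := submodule_eq_bot_or_eq_top_of_mul_mul_mem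
    ((Subalgebra.toSubmodule C).comap (LinearMap.inl K _ _)) fun x s y hs => by
      obtain ⟨x', hx⟩ := hfst x
      obtain ⟨y', hy⟩ := hfst y
      simpa using C.mul_mem (C.mul_mem hx hs) hy
  have hI₂ := submodule_eq_bot_or_eq_top_of_mul_mul_mem
    ((Subalgebra.toSubmodule C).comap (LinearMap.inr K _ _)) fun x s y hs => by
      obtain ⟨x', hx⟩ := hsnd x
      obtain ⟨y', hy⟩ := hsnd y
      simpa using C.mul_mem (C.mul_mem hx hs) hy
  simp only [eq_bot_iff, eq_top_iff, SetLike.le_def, Submodule.mem_comap, Submodule.mem_bot,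
    Subalgebra.mem_toSubmodule, LinearMap.inl_apply, LinearMap.inr_apply, Submodule.mem_top,
    forall_const] at hI₁ hI₂
  rcases hI₁ with h₁ | h₁
  · rcases hI₂ with h₂ | h₂
    · exact .inr (C.exists_algEquiv_of_prod_injective hfst hsnd h₁ h₂)
    · refine .inl (eq_top_iff.2 fun ⟨x, y⟩ _ => ?_)
      obtain ⟨y', hy'⟩ := hfst x
      simpa using C.add_mem hy' (h₂ (x := y - y'))
  · refine .inl (eq_top_iff.2 fun ⟨x, y⟩ _ => ?_)
    obtain ⟨x', hx'⟩ := hsnd y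
    simpa using C.add_mem hx' (h₁ (x := x - x'))

end Matrix

section Blocks

variable {K : Type*} [CommRing K] {ℓ m : ℕ}

def fromUpperBlocks (a : Matrix (Fin ℓ) (Fin ℓ) K) (b : Matrix (Fin ℓ) (Fin m) K)
    (c : Matrix (Fin m) (Fin m) K) : Matrix (Fin (ℓ + m)) (Fin (ℓ + m)) K :=
  reindex finSumFinEquiv finSumFinEquiv (fromBlocks a b 0 c)

@[simp]
theorem blkL_fromUpperBlocks (a : Matrix (Fin ℓ) (Fin ℓ) K) (b : Matrix (Fin ℓ) (Fin m) K)
    (c : Matrix (Fin m) (Fin m) K) : blkL K ℓ m (fromUpperBlocks a b c) = a := by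
  ext i j
  simp [blkL, fromUpperBlocks]

@[simp]
theorem blkR_fromUpperBlocks (a : Matrix (Fin ℓ) (Fin ℓ) K) (b : Matrix (Fin ℓ) (Fin m) K)
    (c : Matrix (Fin m) (Fin m) K) : blkR K ℓ m (fromUpperBlocks a b c) = c := by
  ext i j
  simp [blkR, fromUpperBlocks]

theorem fromUpperBlocks_mul (a a' : Matrix (Fin ℓ) (Fin ℓ) K)
    (b b' : Matrix (Fin ℓ) (Fin m) K) (c c' : Matrix (Fin m) (Fin m) K) :
    fromUpperBlocks a b c * fromUpperBlocks a' b' c'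
      = fromUpperBlocks (a * a') (a * b' + b * c') (c * c') := by
  simp [fromUpperBlocks, reindex_apply, submatrix_mul_equiv, fromBlocks_multiply]

theorem fromUpperBlocks_mem_Eblk (a : Matrix (Fin ℓ) (Fin ℓ) K) (b : Matrix (Fin ℓ) (Fin m) K)
    (c : Matrix (Fin m) (Fin m) K) : fromUpperBlocks a b c ∈ Eblk K ℓ m := by
  intro i j hij
  induction i using Fin.addCases <;> induction j using Fin.addCases <;>
    simp_all [blkIdx, fromUpperBlocks]

theorem exists_eq_fromUpperBlocks_of_mem_Eblk {M : Matrix (Fin (ℓ + m)) (Fin (ℓ + m)) K}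
    (hM : M ∈ Eblk K ℓ m) : ∃ a b c, M = fromUpperBlocks a b c := by
  set N := reindex finSumFinEquiv.symm finSumFinEquiv.symm M
  have hN : N.toBlocks₂₁ = 0 := by
    ext i j
    exact hM (by simp [blkIdx])
  refine ⟨N.toBlocks₁₁, N.toBlocks₁₂, N.toBlocks₂₂, ?_⟩
  rw [fromUpperBlocks, ← hN, fromBlocks_toBlocks]
  simp [N]

end Blocks

namespace Eblk

variable {K : Type*} [CommRing K] {ℓ m : ℕ}

theorem blkL_mul {M N : Matrix (Fin (ℓ + m)) (Fin (ℓ + m)) K} (hM : M ∈ Eblk K ℓ m)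
    (hN : N ∈ Eblk K ℓ m) : blkL K ℓ m (M * N) = blkL K ℓ m M * blkL K ℓ m N := by
  obtain ⟨a, b, c, rfl⟩ := exists_eq_fromUpperBlocks_of_mem_Eblk hM
  obtain ⟨a', b', c', rfl⟩ := exists_eq_fromUpperBlocks_of_mem_Eblk hN
  simp [fromUpperBlocks_mul]

theorem blkR_mul {M N : Matrix (Fin (ℓ + m)) (Fin (ℓ + m)) K} (hM : M ∈ Eblk K ℓ m)
    (hN : N ∈ Eblk K ℓ m) : blkR K ℓ m (M * N) = blkR K ℓ m M * blkR K ℓ m N := by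
  obtain ⟨a, b, c, rfl⟩ := exists_eq_fromUpperBlocks_of_mem_Eblk hM
  obtain ⟨a', b', c', rfl⟩ := exists_eq_fromUpperBlocks_of_mem_Eblk hN
  simp [fromUpperBlocks_mul]

variable (K ℓ m)

def blkLHom : Eblk K ℓ m →ₐ[K] Matrix (Fin ℓ) (Fin ℓ) K :=
  AlgHom.ofLinearMap
    { toFun := fun x => blkL K ℓ m x, map_add' := fun _ _ => rfl, map_smul' := fun _ _ => rfl }
    (by ext i j; simp [blkL, one_apply]) fun x y => blkL_mul x.2 y.2

def blkRHom : Eblk K ℓ m →ₐ[K] Matrix (Fin m) (Fin m) K :=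
  AlgHom.ofLinearMap
    { toFun := fun x => blkR K ℓ m x, map_add' := fun _ _ => rfl, map_smul' := fun _ _ => rfl }
    (by ext i j; simp [blkR, one_apply]) fun x y => blkR_mul x.2 y.2

def corner : Matrix (Fin ℓ) (Fin m) K →ₗ[K] Eblk K ℓ m where
  toFun s := ⟨fromUpperBlocks 0 s 0, fromUpperBlocks_mem_Eblk 0 s 0⟩
  map_add' s t := Subtype.ext <|
    show reindex _ _ _ = reindex _ _ (fromBlocks 0 s 0 0 + fromBlocks 0 t 0 0) by
    simp only [fromBlocks_add, add_zero]
  map_smul' r s := Subtype.ext <|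
    show reindex _ _ _ = reindex _ _ (r • fromBlocks 0 s 0 0) by
    simp only [fromBlocks_smul, smul_zero]

variable {K ℓ m}

@[simp]
theorem blkLHom_apply (x : Eblk K ℓ m) : blkLHom K ℓ m x = blkL K ℓ m x := rfl

@[simp]
theorem blkRHom_apply (x : Eblk K ℓ m) : blkRHom K ℓ m x = blkR K ℓ m x := rfl

theorem mul_corner_mul (x y : Eblk K ℓ m) (s : Matrix (Fin ℓ) (Fin m) K) :
    x * corner K ℓ m s * y = corner K ℓ m (blkL K ℓ m x * s * blkR K ℓ m y) := by
  obtain ⟨_, hx⟩ := x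
  obtain ⟨_, hy⟩ := y
  obtain ⟨a, b, c, rfl⟩ := exists_eq_fromUpperBlocks_of_mem_Eblk hx
  obtain ⟨a', b', c', rfl⟩ := exists_eq_fromUpperBlocks_of_mem_Eblk hy
  ext : 1
  simp [corner, fromUpperBlocks_mul]

theorem exists_eq_corner (x : Eblk K ℓ m) (hL : blkL K ℓ m x = 0) (hR : blkR K ℓ m x = 0) :
    ∃ s, x = corner K ℓ m s := by
  obtain ⟨_, hx⟩ := x
  obtain ⟨a, b, c, rfl⟩ := exists_eq_fromUpperBlocks_of_mem_Eblk hx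
  simp only [blkL_fromUpperBlocks, blkR_fromUpperBlocks] at hL hR
  subst hL hR
  exact ⟨b, rfl⟩

end Eblk

section Nonsplit

variable {K : Type*} [Field K] {ℓ m : ℕ}

theorem Eblk.map_prod_eq_top (S : Subalgebra K (Eblk K ℓ m))
    (hL : S.map (blkLHom K ℓ m) = ⊤) (hR : S.map (blkRHom K ℓ m) = ⊤)
    (hnotself : ¬ ∃ e : Matrix (Fin ℓ) (Fin ℓ) K ≃ₐ[K] Matrix (Fin m) (Fin m) K,
      ∀ x ∈ S, blkR K ℓ m x = e (blkL K ℓ m x)) :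
    S.map ((blkLHom K ℓ m).prod (blkRHom K ℓ m)) = ⊤ := by
  refine (Matrix.subalgebra_prod_eq_top_or_exists_algEquiv _ (fun a => ?_)
    (fun c => ?_)).resolve_right fun ⟨e, he⟩ =>
      hnotself ⟨e, fun x hx => he _ ⟨x, hx, rfl⟩⟩
  · obtain ⟨x, hx, rfl⟩ := Subalgebra.mem_map.1 (hL ▸ Algebra.mem_top : a ∈ S.map _)
    exact ⟨_, x, hx, rfl⟩
  · obtain ⟨x, hx, rfl⟩ := Subalgebra.mem_map.1 (hR ▸ Algebra.mem_top : c ∈ S.map _)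
    exact ⟨_, x, hx, rfl⟩

theorem Eblk.forall_corner_mem (S : Subalgebra K (Eblk K ℓ m))
    (hL : S.map (blkLHom K ℓ m) = ⊤) (hR : S.map (blkRHom K ℓ m) = ⊤)
    {s : Matrix (Fin ℓ) (Fin m) K} (hs : s ≠ 0) (hsS : corner K ℓ m s ∈ S) (t) :
    corner K ℓ m t ∈ S := by
  have hT : (Subalgebra.toSubmodule S).comap (corner K ℓ m) = ⊤ := by
    refine (Matrix.submodule_eq_bot_or_eq_top_of_mul_mul_mem _ fun a t c ht => ?_).resolve_left
      ((Submodule.ne_bot_iff _).2 ⟨s, hsS, hs⟩)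
    obtain ⟨y, hy, rfl⟩ := Subalgebra.mem_map.1 (hL ▸ Algebra.mem_top : a ∈ S.map _)
    obtain ⟨z, hz, rfl⟩ := Subalgebra.mem_map.1 (hR ▸ Algebra.mem_top : c ∈ S.map _)
    simpa [mul_corner_mul] using S.mul_mem (S.mul_mem hy ht) hz
  exact (hT ▸ Submodule.mem_top : t ∈ _)

theorem Eblk.subalgebra_eq_top_of_not_isSemisimpleRing (S : Subalgebra K (Eblk K ℓ m))
    (hL : S.map (blkLHom K ℓ m) = ⊤) (hR : S.map (blkRHom K ℓ m) = ⊤)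
    (hnonsplit : ¬ IsSemisimpleRing S)
    (hnotself : ¬ ∃ e : Matrix (Fin ℓ) (Fin ℓ) K ≃ₐ[K] Matrix (Fin m) (Fin m) K,
      ∀ x ∈ S, blkR K ℓ m x = e (blkL K ℓ m x)) :
    S = ⊤ := by
  set π := (blkLHom K ℓ m).prod (blkRHom K ℓ m)
  have hsurj : ∀ z, ∃ x ∈ S, π x = z := fun z =>
    Subalgebra.mem_map.1 (map_prod_eq_top S hL hR hnotself ▸ Algebra.mem_top)
  obtain ⟨x, hxS, hx0, hπx⟩ : ∃ x ∈ S, x ≠ 0 ∧ π x = 0 := by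
    by_contra! h
    have hbij : Function.Bijective (π.comp S.val) := by
      refine ⟨(injective_iff_map_eq_zero _).2 fun x hx => ?_, fun z => ?_⟩
      · by_contra hne
        exact h x x.2 (by simpa using hne) hx
      · obtain ⟨x, hx, rfl⟩ := hsurj z
        exact ⟨⟨x, hx⟩, rfl⟩
    exact hnonsplit (AlgEquiv.ofBijective _ hbij).toRingEquiv.symm.isSemisimpleRing
  obtain ⟨s, rfl⟩ := exists_eq_corner x (congrArg Prod.fst hπx) (congrArg Prod.snd hπx)
  refine eq_top_iff.2 fun z _ => ?_
  obtain ⟨y, hy, hyz⟩ := hsurj (π z)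
  obtain ⟨t, ht⟩ := exists_eq_corner (z - y)
    (by rw [← blkLHom_apply, map_sub, sub_eq_zero]; exact (congrArg Prod.fst hyz).symm)
    (by rw [← blkRHom_apply, map_sub, sub_eq_zero]; exact (congrArg Prod.snd hyz).symm)
  have hz := S.add_mem hy (forall_corner_mem S hL hR (by rintro rfl; simp at hx0) hxS t)
  rwa [← ht, add_sub_cancel] at hz

end Nonsplit

theorem stmt4_general (k K : Type*) [Field k] [Field K] [Algebra k K]
    (A : Type*) [Ring A] [Algebra k A] (ℓ m : ℕ)
    (ρ : A →ₐ[k] Matrix (Fin (ℓ + m)) (Fin (ℓ + m)) K)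
    (hE : ∀ a, ρ a ∈ Eblk K ℓ m)
    (hirrL : Algebra.adjoin K (Set.range fun a => blkL K ℓ m (ρ a)) = ⊤)
    (hirrR : Algebra.adjoin K (Set.range fun a => blkR K ℓ m (ρ a)) = ⊤)
    (hnonsplit : ¬ IsSemisimpleRing (Algebra.adjoin K (Set.range ρ)))
    (hnotself : ¬ ∃ (h : ℓ = m) (Q₀ : Matrix (Fin m) (Fin m) K), IsUnit Q₀ ∧
      ∀ a, blkR K ℓ m (ρ a) =
        Q₀⁻¹ * (blkL K ℓ m (ρ a)).submatrix (Fin.cast h.symm) (Fin.cast h.symm) * Q₀) :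
    Algebra.adjoin K (Set.range ρ) = Eblk K ℓ m := by
  set S : Subalgebra K (Eblk K ℓ m) := Algebra.adjoin K (Set.range fun a => ⟨ρ a, hE a⟩)
  have hmap {n : ℕ} (f : Eblk K ℓ m →ₐ[K] Matrix (Fin n) (Fin n) K) :
      S.map f = Algebra.adjoin K (Set.range fun a => f ⟨ρ a, hE a⟩) := by
    rw [AlgHom.map_adjoin, ← Set.range_comp]
    rfl
  have hS : Algebra.adjoin K (Set.range ρ) = S.map (Eblk K ℓ m).val :=
    (hmap (Eblk K ℓ m).val).symm
  have hStop : S = ⊤ := by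
    refine Eblk.subalgebra_eq_top_of_not_isSemisimpleRing S ((hmap _).trans hirrL)
      ((hmap _).trans hirrR) ?_ ?_
    · exact fun _ => hnonsplit <| hS ▸ RingEquiv.isSemisimpleRing (R := S)
        (S.equivMapOfInjective (Eblk K ℓ m).val Subtype.val_injective).toRingEquiv
    · rintro ⟨e, he⟩
      obtain ⟨h, Q₀, hQ₀, hconj⟩ := Matrix.exists_conj_of_algEquiv e
      exact hnotself ⟨h, Q₀, hQ₀, fun a =>
        (he _ (Algebra.subset_adjoin ⟨a, rfl⟩)).trans (hconj _)⟩
  rw [hS, hStop, Algebra.map_top, Subalgebra.range_val]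

/-- A nonsplit `(ℓ,m)`-extension of irreducible representations which is not
a self extension satisfies `Kρ(A) = E_{(ℓ,m)}(K)`. -/
theorem stmt4 (k K : Type*) [Field k] [Field K] [Algebra k K]
    (A : Type*) [Ring A] [Algebra k A] (ℓ m : ℕ) (hℓ : 0 < ℓ) (hm : 0 < m)
    (ρ : A →ₐ[k] Matrix (Fin (ℓ + m)) (Fin (ℓ + m)) K)
    (hE : ∀ a, ρ a ∈ Eblk K ℓ m)
    (hirrL : Algebra.adjoin K (Set.range fun a => blkL K ℓ m (ρ a)) = ⊤)
    (hirrR : Algebra.adjoin K (Set.range fun a => blkR K ℓ m (ρ a)) = ⊤)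
    (hnonsplit : ¬ IsSemisimpleRing (Algebra.adjoin K (Set.range ρ)))
    (hnotself : ¬ ∃ (h : ℓ = m) (Q₀ : Matrix (Fin m) (Fin m) K), IsUnit Q₀ ∧
      ∀ a, blkR K ℓ m (ρ a) =
        Q₀⁻¹ * (blkL K ℓ m (ρ a)).submatrix (Fin.cast h.symm) (Fin.cast h.symm) * Q₀) :
    Algebra.adjoin K (Set.range ρ) = Eblk K ℓ m :=
  stmt4_general k K A ℓ m ρ hE hirrL hirrR hnonsplit hnotself
end
end

section
/- Let k be a field, K a field extension of k, A a k-algebra, and ℓ, m positive integers. Suppose ρ : A → E_{(ℓ,m)}(K) is an (ℓ,m)-extension of irreducible representations, and set Λ = Kρ(A). Then ρ does not split if and only if there exists an invertible matrix Q ∈ M_{ℓ+m}(K) with Q E_{(ℓ,m)}(K) Q⁻¹ ⊆ E_{(ℓ,m)}(K) such that SupDiag_{ℓ+m} ∈ Q Λ Q⁻¹. -/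
open Matrix

noncomputable section

/-!
Write the elements of `E_{(ℓ,m)}(K)` as `[[a, b], [0, c]]`. Irreducibility says exactly that the
diagonal projections map `Λ` onto `M_ℓ(K)` and `M_m(K)`; these are semisimple, so the Jacobson
radical of `Λ` consists of elements `[[0, b], [0, 0]]`. The `b` with `[[0, b], [0, 0]] ∈ Λ` form an
`M_ℓ(K)`–`M_m(K)`-sub-bimodule of `M_{ℓ×m}(K)`, hence are `0` (and then `Λ` is semisimple) or all
of `M_{ℓ×m}(K)`. In the second case the `c` with `[[0, *], [0, c]] ∈ Λ` form a two-sided ideal of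
`M_m(K)`. If it is everything, `Λ = E_{(ℓ,m)}(K)` contains `SupDiag`. If it is zero, `c = φ a` on
`Λ` for an isomorphism `φ : M_ℓ(K) → M_m(K)`; so `ℓ = m`, `φ` is conjugation by some `P`
(Skolem–Noether), and conjugating by `diag(1, P⁻¹)` makes `Λ` contain `SupDiag`.

Conversely, a semisimple ring is von Neumann regular, whereas `S Z S ≠ S` for `S = SupDiag` and any
block upper triangular `Z`: the `(ℓ - 1, ℓ)` entry of `S Z S` is the `(ℓ, ℓ - 1)` entry of `Z`.
-/

lemma IsSemisimpleRing.exists_mul_mul_eq_self {R : Type*} [Ring R] [IsSemisimpleRing R] (a : R) :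
    ∃ x, a * x * a = a := by
  obtain ⟨e, he, hspan⟩ := IsSemisimpleRing.ideal_eq_span_idempotent (Ideal.span {a})
  obtain ⟨y, rfl⟩ := Ideal.mem_span_singleton'.1 (hspan ▸ Ideal.mem_span_singleton_self a)
  obtain ⟨x, hx⟩ := Ideal.mem_span_singleton'.1 (hspan ▸ Ideal.mem_span_singleton_self e :
    e ∈ Ideal.span {y * e})
  exact ⟨x, by rw [mul_assoc, hx, mul_assoc, he.eq]⟩

lemma Ring.jacobson_le_ker {R S : Type*} [Ring R] [Ring S] [IsSemisimpleRing S] (f : R →+* S)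
    (hf : Function.Surjective f) : Ring.jacobson R ≤ RingHom.ker f := by
  have : RingHomSurjective f := ⟨hf⟩
  exact IsSemisimpleModule.jacobson_le_ker R S R S f.toSemilinearMap

lemma Matrix.submodule_eq_bot_or_eq_top_of_mul_mem {K p q : Type*} [Field K] [Fintype p]
    [DecidableEq p] [Fintype q] [DecidableEq q] (S : Submodule K (Matrix p q K))
    (hleft : ∀ a : Matrix p p K, ∀ b ∈ S, a * b ∈ S)
    (hright : ∀ c : Matrix q q K, ∀ b ∈ S, b * c ∈ S) : S = ⊥ ∨ S = ⊤ := by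
  refine or_iff_not_imp_left.2 fun hS => eq_top_iff.2 fun u _ => ?_
  obtain ⟨b, hbS, hb⟩ := Submodule.exists_mem_ne_zero_of_ne_bot hS
  obtain ⟨i₀, j₀, hb⟩ : ∃ i₀ j₀, b i₀ j₀ ≠ 0 := by
    by_contra! h
    exact hb (Matrix.ext h)
  have hsingle : ∀ i j c, single i j c ∈ S := fun i j c => by
    simpa [hb] using hright (single j₀ j 1) _ (hleft (single i i₀ (c * (b i₀ j₀)⁻¹)) b hbS)
  rw [matrix_eq_sum_single u]
  exact Submodule.sum_mem _ fun i _ => Submodule.sum_mem _ fun j _ => hsingle i j _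

lemma AlgHom.exists_comp_eq_of_ker_le {R A B C : Type*} [CommSemiring R] [Ring A] [Ring B]
    [Ring C] [Algebra R A] [Algebra R B] [Algebra R C] (f : A →ₐ[R] B)
    (hf : Function.Surjective f) (g : A →ₐ[R] C) (hfg : ∀ x, f x = 0 → g x = 0) :
    ∃ φ : B →ₐ[R] C, φ.comp f = g := by
  have hg : ∀ x y, f x = f y → g x = g y := fun x y h => by
    simpa [sub_eq_zero] using hfg (x - y) (by simp [h])
  let s := Function.surjInv hf
  have hs : ∀ b, f (s b) = b := Function.surjInv_eq hf
  refine ⟨{ toFun := fun b => g (s b)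
            map_one' := by rw [← map_one g]; exact hg _ _ (by simp [hs])
            map_mul' := fun x y => by rw [← map_mul]; exact hg _ _ (by simp [hs])
            map_zero' := by rw [← map_zero g]; exact hg _ _ (by simp [hs])
            map_add' := fun x y => by rw [← map_add]; exact hg _ _ (by simp [hs])
            commutes' := fun r => by rw [← AlgHom.commutes g]; exact hg _ _ (by simp [hs]) },
    AlgHom.ext fun x => hg _ _ (hs _)⟩

lemma AlgHom.mul_mem_map_ker {R A B C : Type*} [CommSemiring R] [Ring A] [Ring B]
    [Ring C] [Algebra R A] [Algebra R B] [Algebra R C] (f : A →ₐ[R] B) (g : A →ₐ[R] C)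
    (hg : Function.Surjective g) {c : C} (hc : c ∈ (LinearMap.ker f.toLinearMap).map g.toLinearMap)
    (d : C) : d * c ∈ (LinearMap.ker f.toLinearMap).map g.toLinearMap ∧
      c * d ∈ (LinearMap.ker f.toLinearMap).map g.toLinearMap := by
  obtain ⟨x, hx, rfl⟩ := hc
  obtain ⟨y, rfl⟩ := hg d
  rw [SetLike.mem_coe, LinearMap.mem_ker, AlgHom.toLinearMap_apply] at hx
  exact ⟨⟨y * x, by simp [hx], by simp⟩, ⟨x * y, by simp [hx], by simp⟩⟩

lemma AlgHom.surjective_of_adjoin_range_comp_eq_top {R A B ι : Type*} [CommSemiring R]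
    [Semiring A] [Semiring B] [Algebra R A] [Algebra R B] (f : A →ₐ[R] B) (g : ι → A)
    (h : Algebra.adjoin R (Set.range (f ∘ g)) = ⊤) : Function.Surjective f := by
  rw [← AlgHom.range_eq_top, eq_top_iff, ← h]
  exact Algebra.adjoin_le (Set.range_subset_iff.2 fun i => ⟨g i, rfl⟩)

namespace Matrix

variable {K n o : Type*} [Field K] [Fintype n] [DecidableEq n] [Fintype o]

lemma mulVec_injective_of_forall_exists_mul_eq {P : Matrix o n K} (hP : P ≠ 0)
    (h : ∀ a : Matrix n n K, ∃ b : Matrix o o K, P * a = b * P) : Function.Injective P.mulVec := by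
  refine (injective_iff_map_eq_zero (mulVecLin P)).2 fun v hv => ?_
  rw [mulVecLin_apply] at hv
  by_contra hv0
  obtain ⟨t, ht⟩ : ∃ t, v t ≠ 0 := by simpa [funext_iff] using hv0
  refine hP (ext_iff_mulVec.2 fun u => ?_)
  obtain ⟨b, hb⟩ := h (vecMulVec u (Pi.single t (v t)⁻¹))
  have hu : vecMulVec u (Pi.single t (v t)⁻¹) *ᵥ v = u := by
    simp [vecMulVec_mulVec, ht]
  rw [zero_mulVec, ← hu, mulVec_mulVec, hb, ← mulVec_mulVec, hv, mulVec_zero]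

lemma exists_isUnit_algHom_mul_eq_mul [Nonempty n] (φ : Matrix n n K →ₐ[K] Matrix n n K) :
    ∃ P : Matrix n n K, IsUnit P ∧ ∀ a, φ a * P = P * a := by
  obtain ⟨i₀⟩ := ‹Nonempty n›
  let E : n → n → Matrix n n K := fun i j => single i j 1
  obtain ⟨p, q, hpq⟩ : ∃ p q, φ (E i₀ i₀) p q ≠ 0 := by
    by_contra! h
    have h0 : E i₀ i₀ = 0 := φ.toRingHom.injective ((Matrix.ext h).trans (map_zero φ).symm)
    simpa [E] using congrFun₂ h0 i₀ i₀
  let P := ∑ j, φ (E j i₀) * E q i₀ * E i₀ j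
  -- `P` is built from the matrix units so that `φ (E r s) * P` and `P * E r s` both collapse
  -- to `φ (E r i₀) * E q i₀ * E i₀ s`.
  have hsingle : ∀ r s, φ (E r s) * P = P * E r s := by
    intro r s
    simp only [P, Finset.mul_sum, Finset.sum_mul, ← mul_assoc, ← map_mul]
    rw [Finset.sum_eq_single s (fun b _ hb => by simp [E, Ne.symm hb]) (by simp),
      Finset.sum_eq_single r (fun b _ hb => by simp [E, mul_assoc, hb]) (by simp)]
    simp [E, mul_assoc]
  have hP : ∀ a, φ a * P = P * a := by
    intro a
    induction a using Matrix.induction_on' with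
    | h_zero => simp
    | h_add a b ha hb => simp [add_mul, mul_add, ha, hb]
    | h_std_basis i j c =>
      have hc : single i j c = c • E i j := by simp [E, smul_single]
      rw [hc, map_smul, smul_mul_assoc, hsingle, mul_smul_comm]
  have hPE : P * E i₀ i₀ = φ (E i₀ i₀) * E q i₀ := by
    simp only [P, Finset.sum_mul]
    rw [Finset.sum_eq_single i₀ (fun b _ hb => by simp [E, mul_assoc, hb]) (by simp)]
    simp [E, mul_assoc]
  have hP0 : P ≠ 0 := by
    intro h0
    exact hpq (by simpa [h0, E] using (congrFun₂ hPE p i₀).symm)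
  exact ⟨P, mulVec_injective_iff_isUnit.1 (mulVec_injective_of_forall_exists_mul_eq hP0
    fun a => ⟨φ a, (hP a).symm⟩), hP⟩

end Matrix

namespace Eblk

variable {K : Type*} [CommRing K] {ℓ m : ℕ}

def blockTri (a : Matrix (Fin ℓ) (Fin ℓ) K) (b : Matrix (Fin ℓ) (Fin m) K)
    (c : Matrix (Fin m) (Fin m) K) : Matrix (Fin (ℓ + m)) (Fin (ℓ + m)) K :=
  reindex finSumFinEquiv finSumFinEquiv (fromBlocks a b 0 c)

@[simp]
lemma blkL_blockTri (a : Matrix (Fin ℓ) (Fin ℓ) K) (b : Matrix (Fin ℓ) (Fin m) K)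
    (c : Matrix (Fin m) (Fin m) K) : blkL K ℓ m (blockTri a b c) = a := by
  ext i j; simp [blkL, blockTri]

@[simp]
lemma blkR_blockTri (a : Matrix (Fin ℓ) (Fin ℓ) K) (b : Matrix (Fin ℓ) (Fin m) K)
    (c : Matrix (Fin m) (Fin m) K) : blkR K ℓ m (blockTri a b c) = c := by
  ext i j; simp [blkR, blockTri]

lemma blockTri_mul (a a' : Matrix (Fin ℓ) (Fin ℓ) K) (b b' : Matrix (Fin ℓ) (Fin m) K)
    (c c' : Matrix (Fin m) (Fin m) K) :
    blockTri a b c * blockTri a' b' c' = blockTri (a * a') (a * b' + b * c') (c * c') := by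
  simp [blockTri, fromBlocks_multiply]

lemma blockTri_add (a a' : Matrix (Fin ℓ) (Fin ℓ) K) (b b' : Matrix (Fin ℓ) (Fin m) K)
    (c c' : Matrix (Fin m) (Fin m) K) :
    blockTri a b c + blockTri a' b' c' = blockTri (a + a') (b + b') (c + c') := by
  ext i j
  induction i using Fin.addCases <;> induction j using Fin.addCases <;> simp [blockTri]

lemma blockTri_smul (r : K) (a : Matrix (Fin ℓ) (Fin ℓ) K) (b : Matrix (Fin ℓ) (Fin m) K)
    (c : Matrix (Fin m) (Fin m) K) : r • blockTri a b c = blockTri (r • a) (r • b) (r • c) := by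
  ext i j
  induction i using Fin.addCases <;> induction j using Fin.addCases <;> simp [blockTri]

@[simp]
lemma blockTri_zero :
    blockTri (0 : Matrix (Fin ℓ) (Fin ℓ) K) 0 (0 : Matrix (Fin m) (Fin m) K) = 0 := by
  simp [blockTri]

lemma blockTri_one :
    blockTri (1 : Matrix (Fin ℓ) (Fin ℓ) K) 0 (1 : Matrix (Fin m) (Fin m) K) = 1 := by
  ext i j
  induction i using Fin.addCases <;> induction j using Fin.addCases <;>
    simp [blockTri, one_apply, Fin.ext_iff] <;> omega

lemma mem_iff_exists_eq_blockTri {M : Matrix (Fin (ℓ + m)) (Fin (ℓ + m)) K} :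
    M ∈ Eblk K ℓ m ↔ ∃ a b c, M = blockTri a b c := by
  constructor
  · intro hM
    refine ⟨blkL K ℓ m M, of fun i j => M (Fin.castAdd m i) (Fin.natAdd ℓ j), blkR K ℓ m M, ?_⟩
    ext i j
    induction i using Fin.addCases <;> induction j using Fin.addCases <;>
      simp [blockTri, blkL, blkR]
    exact hM (by simp [blkIdx])
  · rintro ⟨a, b, c, rfl⟩ i j hij
    induction i using Fin.addCases <;> induction j using Fin.addCases <;>
      simp_all [blkIdx, blockTri]

lemma blockTri_mem (a : Matrix (Fin ℓ) (Fin ℓ) K) (b : Matrix (Fin ℓ) (Fin m) K)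
    (c : Matrix (Fin m) (Fin m) K) : blockTri a b c ∈ Eblk K ℓ m :=
  mem_iff_exists_eq_blockTri.2 ⟨a, b, c, rfl⟩

section Projections

variable {Λ : Subalgebra K (Matrix (Fin (ℓ + m)) (Fin (ℓ + m)) K)}

def projL (hΛ : Λ ≤ Eblk K ℓ m) : Λ →ₐ[K] Matrix (Fin ℓ) (Fin ℓ) K where
  toFun X := blkL K ℓ m X
  map_one' := by simpa using congrArg (blkL K ℓ m) blockTri_one.symm
  map_mul' X Y := by
    obtain ⟨a, b, c, hX⟩ := mem_iff_exists_eq_blockTri.1 (hΛ X.2)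
    obtain ⟨a', b', c', hY⟩ := mem_iff_exists_eq_blockTri.1 (hΛ Y.2)
    simp [hX, hY, blockTri_mul]
  map_zero' := by ext; simp [blkL]
  map_add' X Y := by ext; simp [blkL]
  commutes' r := by ext; simp [blkL, algebraMap_matrix_apply]

def projR (hΛ : Λ ≤ Eblk K ℓ m) : Λ →ₐ[K] Matrix (Fin m) (Fin m) K where
  toFun X := blkR K ℓ m X
  map_one' := by simpa using congrArg (blkR K ℓ m) blockTri_one.symm
  map_mul' X Y := by
    obtain ⟨a, b, c, hX⟩ := mem_iff_exists_eq_blockTri.1 (hΛ X.2)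
    obtain ⟨a', b', c', hY⟩ := mem_iff_exists_eq_blockTri.1 (hΛ Y.2)
    simp [hX, hY, blockTri_mul]
  map_zero' := by ext; simp [blkR]
  map_add' X Y := by ext; simp [blkR]
  commutes' r := by ext; simp [blkR, algebraMap_matrix_apply]

@[simp] lemma projL_apply (hΛ : Λ ≤ Eblk K ℓ m) (X : Λ) : projL hΛ X = blkL K ℓ m X := rfl
@[simp] lemma projR_apply (hΛ : Λ ≤ Eblk K ℓ m) (X : Λ) : projR hΛ X = blkR K ℓ m X := rfl

end Projections

end Eblk

section SupDiag

variable {K : Type*} [CommRing K] {ℓ m : ℕ}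

lemma supDiag_mem_Eblk : supDiag K (ℓ + m) ∈ Eblk K ℓ m := by
  intro i j hij
  simp only [blkIdx] at hij
  split_ifs at hij <;> simp [supDiag] <;> omega

@[simp]
lemma blkL_supDiag : blkL K ℓ m (supDiag K (ℓ + m)) = supDiag K ℓ := by
  ext i j; simp [blkL, supDiag]

@[simp]
lemma blkR_supDiag : blkR K ℓ m (supDiag K (ℓ + m)) = supDiag K m := by
  ext i j; simp [blkR, supDiag, add_assoc]

lemma supDiag_mul_mul_supDiag_ne [Nontrivial K] (hℓ : 0 < ℓ) (hm : 0 < m)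
    {Z : Matrix (Fin (ℓ + m)) (Fin (ℓ + m)) K} (hZ : Z ∈ Eblk K ℓ m) :
    supDiag K (ℓ + m) * Z * supDiag K (ℓ + m) ≠ supDiag K (ℓ + m) := by
  intro h
  set i : Fin (ℓ + m) := ⟨ℓ - 1, by omega⟩
  set j : Fin (ℓ + m) := ⟨ℓ, by omega⟩
  have hij := congrFun₂ h i j
  rw [Matrix.mul_apply, Finset.sum_eq_single i, Matrix.mul_apply, Finset.sum_eq_single j,
    hZ (by simp [blkIdx, i, j]; omega)] at hij
  · simp [supDiag, i, j] at hij
    omega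
  all_goals first
    | intro b _ hb
      simp only [supDiag, of_apply, i, j, ne_eq, Fin.ext_iff] at hb ⊢
      rw [if_neg (by omega)]
      simp
    | simp

end SupDiag

namespace Eblk

variable {K : Type*} [Field K] {ℓ m : ℕ}

section

variable {Λ : Subalgebra K (Matrix (Fin (ℓ + m)) (Fin (ℓ + m)) K)}

lemma mem_of_blkL_eq_of_blkR_eq (hΛ : Λ ≤ Eblk K ℓ m) (hT : ∀ b, blockTri 0 b 0 ∈ Λ)
    {X M : Matrix (Fin (ℓ + m)) (Fin (ℓ + m)) K} (hX : X ∈ Λ) (hM : M ∈ Eblk K ℓ m)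
    (hL : blkL K ℓ m X = blkL K ℓ m M) (hR : blkR K ℓ m X = blkR K ℓ m M) : M ∈ Λ := by
  obtain ⟨a, b, c, rfl⟩ := mem_iff_exists_eq_blockTri.1 (hΛ hX)
  obtain ⟨a', b', c', rfl⟩ := mem_iff_exists_eq_blockTri.1 hM
  simp only [blkL_blockTri, blkR_blockTri] at hL hR
  subst hL hR
  simpa [blockTri_add] using add_mem hX (hT (b' - b))

lemma isSemisimpleRing_of_forall_blockTri_mem_eq_zero (hΛ : Λ ≤ Eblk K ℓ m)
    (hL : Function.Surjective (projL hΛ)) (hR : Function.Surjective (projR hΛ))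
    (hT : ∀ b, blockTri 0 b 0 ∈ Λ → b = 0) : IsSemisimpleRing Λ := by
  have : IsArtinianRing Λ := IsArtinianRing.of_finite K Λ
  rw [IsArtinianRing.isSemisimpleRing_iff_jacobson, eq_bot_iff]
  intro x hx
  have hxL : blkL K ℓ m x = 0 := Ring.jacobson_le_ker (projL hΛ).toRingHom hL hx
  have hxR : blkR K ℓ m x = 0 := Ring.jacobson_le_ker (projR hΛ).toRingHom hR hx
  obtain ⟨a, b, c, hx'⟩ := mem_iff_exists_eq_blockTri.1 (hΛ x.2)
  simp only [hx', blkL_blockTri, blkR_blockTri] at hxL hxR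
  subst hxL hxR
  rw [Ideal.mem_bot, ← Subtype.coe_inj, hx', hT b (hx' ▸ x.2)]
  simp

lemma blockTri_mem_of_not_isSemisimpleRing (hΛ : Λ ≤ Eblk K ℓ m)
    (hL : Function.Surjective (projL hΛ)) (hR : Function.Surjective (projR hΛ))
    (hΛs : ¬ IsSemisimpleRing Λ) (b : Matrix (Fin ℓ) (Fin m) K) : blockTri 0 b 0 ∈ Λ := by
  let J : Submodule K (Matrix (Fin ℓ) (Fin m) K) :=
    { carrier := {b | blockTri 0 b 0 ∈ Λ}
      add_mem' := fun {b b'} (hb : blockTri 0 b 0 ∈ Λ) hb' => by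
        simpa [blockTri_add] using add_mem hb hb'
      zero_mem' := by simp
      smul_mem' := fun r b (hb : blockTri 0 b 0 ∈ Λ) => by
        simpa [blockTri_smul] using Λ.smul_mem hb r }
  have hleft : ∀ a : Matrix (Fin ℓ) (Fin ℓ) K, ∀ b ∈ J, a * b ∈ J :=
      fun a b (hb : blockTri 0 b 0 ∈ Λ) => by
    show blockTri 0 (a * b) 0 ∈ Λ
    obtain ⟨⟨X, hX⟩, hXa⟩ := hL a
    obtain ⟨a', b', c', rfl⟩ := mem_iff_exists_eq_blockTri.1 (hΛ hX)
    simp only [projL_apply, blkL_blockTri] at hXa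
    simpa [blockTri_mul, hXa] using Λ.mul_mem hX hb
  have hright : ∀ c : Matrix (Fin m) (Fin m) K, ∀ b ∈ J, b * c ∈ J :=
      fun c b (hb : blockTri 0 b 0 ∈ Λ) => by
    show blockTri 0 (b * c) 0 ∈ Λ
    obtain ⟨⟨X, hX⟩, hXc⟩ := hR c
    obtain ⟨a', b', c', rfl⟩ := mem_iff_exists_eq_blockTri.1 (hΛ hX)
    simp only [projR_apply, blkR_blockTri] at hXc
    simpa [blockTri_mul, hXc] using Λ.mul_mem hb hX
  rcases Matrix.submodule_eq_bot_or_eq_top_of_mul_mem J hleft hright with hJ | hJ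
  · exact absurd (isSemisimpleRing_of_forall_blockTri_mem_eq_zero hΛ hL hR fun b hb =>
      (Submodule.mem_bot K).1 (hJ ▸ hb : b ∈ (⊥ : Submodule K _))) hΛs
  · exact (hJ ▸ Submodule.mem_top : b ∈ J)

end

lemma not_isSemisimpleRing_of_supDiag_mem_conj (hℓ : 0 < ℓ) (hm : 0 < m)
    {Λ : Subalgebra K (Matrix (Fin (ℓ + m)) (Fin (ℓ + m)) K)} (hΛ : Λ ≤ Eblk K ℓ m)
    {Q : Matrix (Fin (ℓ + m)) (Fin (ℓ + m)) K} (hQ : IsUnit Q)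
    (hQE : ∀ M ∈ Eblk K ℓ m, Q * M * Q⁻¹ ∈ Eblk K ℓ m)
    (hS : supDiag K (ℓ + m) ∈ (fun M => Q * M * Q⁻¹) '' (Λ : Set _)) :
    ¬ IsSemisimpleRing Λ := by
  intro hΛs
  obtain ⟨M, hM, hQM⟩ := hS
  obtain ⟨⟨y, hy⟩, hMyM⟩ := IsSemisimpleRing.exists_mul_mul_eq_self (⟨M, hM⟩ : Λ)
  have hMyM : M * y * M = M := congrArg Subtype.val hMyM
  refine supDiag_mul_mul_supDiag_ne hℓ hm (hQE y (hΛ hy)) ?_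
  have hQQ : Q⁻¹ * Q = 1 := Matrix.nonsing_inv_mul Q ((Matrix.isUnit_iff_isUnit_det Q).1 hQ)
  simp only [← hQM]
  calc Q * M * Q⁻¹ * (Q * y * Q⁻¹) * (Q * M * Q⁻¹) = Q * (M * y * M) * Q⁻¹ := by
        simp only [mul_assoc, ← mul_assoc Q⁻¹ Q, hQQ, one_mul]
    _ = Q * M * Q⁻¹ := by rw [hMyM]

lemma exists_supDiag_mem_conj_of_mul_eq_mul
    {Λ : Subalgebra K (Matrix (Fin (ℓ + ℓ)) (Fin (ℓ + ℓ)) K)} (hΛ : Λ ≤ Eblk K ℓ ℓ)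
    (hT : ∀ b, blockTri 0 b 0 ∈ Λ) (hL : Function.Surjective (projL hΛ))
    {P : Matrix (Fin ℓ) (Fin ℓ) K} (hP : IsUnit P)
    (hPΛ : ∀ X ∈ Λ, blkR K ℓ ℓ X * P = P * blkL K ℓ ℓ X) :
    ∃ Q : Matrix (Fin (ℓ + ℓ)) (Fin (ℓ + ℓ)) K, IsUnit Q ∧
      (∀ M ∈ Eblk K ℓ ℓ, Q * M * Q⁻¹ ∈ Eblk K ℓ ℓ) ∧
      supDiag K (ℓ + ℓ) ∈ (fun M => Q * M * Q⁻¹) '' (Λ : Set _) := by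
  have hdet := (Matrix.isUnit_iff_isUnit_det P).1 hP
  set Q := blockTri (1 : Matrix (Fin ℓ) (Fin ℓ) K) 0 P⁻¹
  set Q' := blockTri (1 : Matrix (Fin ℓ) (Fin ℓ) K) 0 P
  have hQQ' : Q * Q' = 1 := by simp [Q, Q', blockTri_mul, blockTri_one, nonsing_inv_mul _ hdet]
  have hQ'Q : Q' * Q = 1 := by simp [Q, Q', blockTri_mul, blockTri_one, mul_nonsing_inv _ hdet]
  have hQinv : Q⁻¹ = Q' := Matrix.inv_eq_right_inv hQQ'
  obtain ⟨a, b, c, hS⟩ := mem_iff_exists_eq_blockTri.1 (supDiag_mem_Eblk (K := K) (ℓ := ℓ) (m := ℓ))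
  have ha : a = supDiag K ℓ := by simpa [hS] using blkL_supDiag (K := K) (ℓ := ℓ) (m := ℓ)
  have hc : c = supDiag K ℓ := by simpa [hS] using blkR_supDiag (K := K) (ℓ := ℓ) (m := ℓ)
  have hM₀ : Q' * supDiag K (ℓ + ℓ) * Q = blockTri a (b * P⁻¹) (P * c * P⁻¹) := by
    simp [Q, Q', hS, blockTri_mul]
  obtain ⟨⟨X, hXΛ⟩, hX⟩ := hL (supDiag K ℓ)
  simp only [projL_apply] at hX
  refine ⟨Q, ⟨⟨Q, Q', hQQ', hQ'Q⟩, rfl⟩, fun M hM => ?_, Q' * supDiag K (ℓ + ℓ) * Q, ?_, ?_⟩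
  · rw [hQinv]
    exact mul_mem (mul_mem (blockTri_mem _ _ _) hM) (blockTri_mem _ _ _)
  · refine mem_of_blkL_eq_of_blkR_eq hΛ hT hXΛ (hM₀ ▸ blockTri_mem _ _ _) ?_ ?_
    · simp [hM₀, hX, ha]
    · rw [hM₀, blkR_blockTri, hc, ← hX, ← hPΛ X hXΛ, mul_assoc, mul_nonsing_inv _ hdet,
        mul_one]
  · simp only [hQinv, ← mul_assoc, hQQ', one_mul]
    simp [mul_assoc, hQQ']

lemma exists_supDiag_mem_conj_of_forall_projL_eq_zero (hℓ : 0 < ℓ) (hm : 0 < m)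
    {Λ : Subalgebra K (Matrix (Fin (ℓ + m)) (Fin (ℓ + m)) K)} (hΛ : Λ ≤ Eblk K ℓ m)
    (hT : ∀ b, blockTri 0 b 0 ∈ Λ)
    (hL : Function.Surjective (projL hΛ)) (hR : Function.Surjective (projR hΛ))
    (hker : ∀ x, projL hΛ x = 0 → projR hΛ x = 0) :
    ∃ Q : Matrix (Fin (ℓ + m)) (Fin (ℓ + m)) K, IsUnit Q ∧
      (∀ M ∈ Eblk K ℓ m, Q * M * Q⁻¹ ∈ Eblk K ℓ m) ∧
      supDiag K (ℓ + m) ∈ (fun M => Q * M * Q⁻¹) '' (Λ : Set _) := by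
  obtain ⟨φ, hφ⟩ := (projL hΛ).exists_comp_eq_of_ker_le hL (projR hΛ) hker
  have : NeZero ℓ := ⟨hℓ.ne'⟩
  have : NeZero m := ⟨hm.ne'⟩
  have hφbij : Function.Bijective φ := ⟨φ.toRingHom.injective, fun c =>
    let ⟨x, hx⟩ := hR c; ⟨projL hΛ x, by rw [← hx, ← hφ]; rfl⟩⟩
  have hℓm : ℓ * ℓ = m * m := by
    simpa [Module.finrank_matrix] using (LinearEquiv.ofBijective φ.toLinearMap hφbij).finrank_eq
  obtain rfl : ℓ = m := Nat.mul_self_inj.1 hℓm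
  obtain ⟨P, hP, hφP⟩ := Matrix.exists_isUnit_algHom_mul_eq_mul φ
  refine exists_supDiag_mem_conj_of_mul_eq_mul hΛ hT hL hP fun X hX => ?_
  rw [← hφP]
  exact congrArg (· * P) (DFunLike.congr_fun hφ ⟨X, hX⟩).symm

lemma exists_supDiag_mem_conj_of_not_isSemisimpleRing (hℓ : 0 < ℓ) (hm : 0 < m)
    {Λ : Subalgebra K (Matrix (Fin (ℓ + m)) (Fin (ℓ + m)) K)} (hΛ : Λ ≤ Eblk K ℓ m)
    (hL : Function.Surjective (projL hΛ)) (hR : Function.Surjective (projR hΛ))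
    (hΛs : ¬ IsSemisimpleRing Λ) :
    ∃ Q : Matrix (Fin (ℓ + m)) (Fin (ℓ + m)) K, IsUnit Q ∧
      (∀ M ∈ Eblk K ℓ m, Q * M * Q⁻¹ ∈ Eblk K ℓ m) ∧
      supDiag K (ℓ + m) ∈ (fun M => Q * M * Q⁻¹) '' (Λ : Set _) := by
  have hT := blockTri_mem_of_not_isSemisimpleRing hΛ hL hR hΛs
  let I := (LinearMap.ker (projL hΛ).toLinearMap).map (projR hΛ).toLinearMap
  rcases Matrix.submodule_eq_bot_or_eq_top_of_mul_mem I
      (fun d _ hc => ((projL hΛ).mul_mem_map_ker _ hR hc d).1)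
      (fun d _ hc => ((projL hΛ).mul_mem_map_ker _ hR hc d).2) with hI | hI
  · refine exists_supDiag_mem_conj_of_forall_projL_eq_zero hℓ hm hΛ hT hL hR fun x hx => ?_
    have hxI : projR hΛ x ∈ I := Submodule.mem_map_of_mem hx
    rwa [hI, Submodule.mem_bot] at hxI
  · refine ⟨1, isUnit_one, by simp, supDiag K (ℓ + m), ?_, by simp⟩
    obtain ⟨X, hX⟩ := hL (supDiag K ℓ)
    obtain ⟨Y, hY, hYR⟩ := (hI ▸ Submodule.mem_top : supDiag K m - blkR K ℓ m X ∈ I)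
    simp only [SetLike.mem_coe, LinearMap.mem_ker, AlgHom.toLinearMap_apply] at hY hYR
    refine mem_of_blkL_eq_of_blkR_eq hΛ hT (X + Y).2 supDiag_mem_Eblk ?_ ?_
    · change projL hΛ (X + Y) = _
      rw [map_add, hX, hY, add_zero, blkL_supDiag]
    · change projR hΛ (X + Y) = _
      rw [map_add, hYR, projR_apply, add_sub_cancel, blkR_supDiag]

end Eblk

/-- An `(ℓ,m)`-extension of irreducible representations `ρ` is nonsplit iff
`SupDiag_{ℓ+m} ∈ Q Λ Q⁻¹` for some invertible `Q` with `Q E_{(ℓ,m)}(K) Q⁻¹ ⊆ E_{(ℓ,m)}(K)`. -/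
theorem stmt6 (k K : Type*) [Field k] [Field K] [Algebra k K]
    (A : Type*) [Ring A] [Algebra k A] (ℓ m : ℕ) (hℓ : 0 < ℓ) (hm : 0 < m)
    (ρ : A →ₐ[k] Matrix (Fin (ℓ + m)) (Fin (ℓ + m)) K)
    (hE : ∀ a, ρ a ∈ Eblk K ℓ m)
    (hirrL : Algebra.adjoin K (Set.range fun a => blkL K ℓ m (ρ a)) = ⊤)
    (hirrR : Algebra.adjoin K (Set.range fun a => blkR K ℓ m (ρ a)) = ⊤)
    (Λ : Subalgebra K (Matrix (Fin (ℓ + m)) (Fin (ℓ + m)) K))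
    (hΛ : Λ = Algebra.adjoin K (Set.range ρ)) :
    ¬ IsSemisimpleRing Λ ↔
      ∃ Q : Matrix (Fin (ℓ + m)) (Fin (ℓ + m)) K, IsUnit Q ∧
        (∀ M ∈ Eblk K ℓ m, Q * M * Q⁻¹ ∈ Eblk K ℓ m) ∧
        supDiag K (ℓ + m) ∈
          (fun M => Q * M * Q⁻¹) '' (Λ : Set (Matrix (Fin (ℓ + m)) (Fin (ℓ + m)) K)) := by
  have hΛE : Λ ≤ Eblk K ℓ m := hΛ ▸ Algebra.adjoin_le (Set.range_subset_iff.2 hE)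
  let ρΛ : A → Λ := fun a => ⟨ρ a, hΛ ▸ Algebra.subset_adjoin ⟨a, rfl⟩⟩
  have hL := (Eblk.projL hΛE).surjective_of_adjoin_range_comp_eq_top ρΛ hirrL
  have hR := (Eblk.projR hΛE).surjective_of_adjoin_range_comp_eq_top ρΛ hirrR
  exact ⟨Eblk.exists_supDiag_mem_conj_of_not_isSemisimpleRing hℓ hm hΛE hL hR,
    fun ⟨_, hQ, hQE, hS⟩ => Eblk.not_isSemisimpleRing_of_supDiag_mem_conj hℓ hm hΛE hQ hQE hS⟩
end
end

section
/- Let K be a field and n a positive integer. The matrices SupDiag_n and SubDiag_n generate M_n(K) as a K-algebra; that is, the smallest K-subalgebra of M_n(K) containing SupDiag_n and SubDiag_n is M_n(K) itself. -/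
/-!
With `N = supDiag K (m + 1)`, the powers `N ^ m` and `(Nᵀ) ^ m` are the corner matrix units
`E₀ₘ` and `Eₘ₀`, so their product is `E₀₀`. Shifting it by powers of `Nᵀ` on the left and of
`N` on the right gives every matrix unit, `Eᵢⱼ = (Nᵀ) ^ i * E₀₀ * N ^ j`, and the matrix units
span all matrices.
-/

open Matrix

noncomputable section

namespace Matrix

variable {R : Type*} {ι : Type*} [Fintype ι] [DecidableEq ι]

theorem mul_single_mul_apply [Semiring R] (A B : Matrix ι ι R) (a b : ι) (c : R) (x y : ι) :
    (A * single a b c * B) x y = A x a * c * B b y := by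
  rw [mul_apply, Finset.sum_eq_single b]
  · simp [mul_apply, single_apply]
  · intro l _ hl
    simp [mul_apply, hl.symm]
  · simp

theorem subalgebra_eq_top_of_single_one_mem [CommSemiring R] {S : Subalgebra R (Matrix ι ι R)}
    (h : ∀ i j, single i j (1 : R) ∈ S) : S = ⊤ :=
  eq_top_iff.2 fun M _ => M.induction_on' S.zero_mem (fun _ _ => S.add_mem) fun i j x => by
    simpa [smul_single] using S.smul_mem (h i j) x

end Matrix

section Semiring

variable (K : Type*) [Semiring K]

theorem supDiag_mul_apply {n : ℕ} (A : Matrix (Fin n) (Fin n) K) (i j : Fin n) :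
    (supDiag K n * A) i j = if h : (i : ℕ) + 1 < n then A ⟨i + 1, h⟩ j else 0 := by
  rw [mul_apply]
  split_ifs with h
  · rw [Finset.sum_eq_single ⟨i + 1, h⟩] <;> simp +contextual [supDiag, Fin.ext_iff, eq_comm]
  · refine Finset.sum_eq_zero fun l _ => ?_
    simp only [supDiag, of_apply]
    rw [if_neg (by omega), zero_mul]

theorem supDiag_pow_apply (n k : ℕ) (i j : Fin n) :
    (supDiag K n ^ k) i j = if (i : ℕ) + k = j then 1 else 0 := by
  induction k generalizing i with
  | zero => simp [one_apply, Fin.ext_iff]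
  | succ k ih =>
    rw [pow_succ', supDiag_mul_apply]
    by_cases h : (i : ℕ) + 1 < n
    · rw [dif_pos h, ih]
      exact if_congr (by rw [Fin.val_mk]; omega) rfl rfl
    · rw [dif_neg h, if_neg (by omega)]

theorem supDiag_pow_last (m : ℕ) : supDiag K (m + 1) ^ m = single 0 (Fin.last m) 1 := by
  ext i j
  rw [supDiag_pow_apply, single_apply]
  simp only [Fin.ext_iff, Fin.val_zero, Fin.val_last]
  exact if_congr (by omega) rfl rfl

end Semiring

section CommSemiring

variable (K : Type*) [CommSemiring K]

theorem subDiag_pow_apply (n k : ℕ) (i j : Fin n) :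
    (subDiag K n ^ k) i j = if (j : ℕ) + k = i then 1 else 0 := by
  rw [subDiag, ← transpose_pow, transpose_apply, supDiag_pow_apply]

theorem subDiag_pow_last (m : ℕ) : subDiag K (m + 1) ^ m = single (Fin.last m) 0 1 := by
  rw [subDiag, ← transpose_pow, supDiag_pow_last, transpose_single]

theorem single_one_eq_subDiag_pow_mul_mul_supDiag_pow (m : ℕ) (i j : Fin (m + 1)) :
    single i j (1 : K) =
      subDiag K (m + 1) ^ (i : ℕ) * (supDiag K (m + 1) ^ m * subDiag K (m + 1) ^ m) *
        supDiag K (m + 1) ^ (j : ℕ) := by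
  rw [supDiag_pow_last, subDiag_pow_last, single_mul_single_same, one_mul]
  ext x y
  rw [mul_single_mul_apply, subDiag_pow_apply, supDiag_pow_apply, single_apply]
  simp only [Fin.ext_iff, ite_and, Fin.coe_ofNat_eq_mod, Nat.zero_mod, zero_add, mul_one, mul_ite,
    mul_zero]
  split_ifs <;> rfl

theorem adjoin_supDiag_subDiag_eq_top (n : ℕ) :
    Algebra.adjoin K {supDiag K n, subDiag K n} = ⊤ := by
  refine subalgebra_eq_top_of_single_one_mem fun i j => ?_
  obtain ⟨m, rfl⟩ : ∃ m, n = m + 1 := Nat.exists_eq_add_one.2 i.pos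
  have hsup : supDiag K (m + 1) ∈ Algebra.adjoin K {supDiag K (m + 1), subDiag K (m + 1)} :=
    Algebra.subset_adjoin (by simp)
  have hsub : subDiag K (m + 1) ∈ Algebra.adjoin K {supDiag K (m + 1), subDiag K (m + 1)} :=
    Algebra.subset_adjoin (by simp)
  rw [single_one_eq_subDiag_pow_mul_mul_supDiag_pow]
  exact mul_mem (mul_mem (pow_mem hsub _) (mul_mem (pow_mem hsup _) (pow_mem hsub _)))
    (pow_mem hsup _)

end CommSemiring

theorem stmt9_general (K : Type*) [Field K] (n : ℕ) :
    Algebra.adjoin K {supDiag K n, subDiag K n} = ⊤ :=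
  adjoin_supDiag_subDiag_eq_top K n

/-- `SupDiag_n` and `SubDiag_n` generate `M_n(K)` as a `K`-algebra. -/
theorem stmt9 (K : Type*) [Field K] (n : ℕ) (hn : 0 < n) :
    Algebra.adjoin K {supDiag K n, subDiag K n} = ⊤ :=
  stmt9_general K n
end
end

section
/- Let K be a field, n ≥ 2 and s ≥ 1 integers, and a_1, …, a_s ∈ M_n(K). Then the K-subalgebra of M_n(K) generated by a_1, …, a_s is K-linearly spanned by the products a_{j_1}^{i_1} a_{j_2}^{i_2} ⋯ a_{j_p}^{i_p} with j_1, …, j_p ∈ {1, …, s}, with i_1 + ⋯ + i_p ≤ n² − 1, and with 1 ≤ i_r ≤ n − 1 for each r (the empty product, p = 0, being the identity matrix). -/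
/-!
Let `W` be the span of `1` and the generators. The powers `W ^ 0 ≤ W ^ 1 ≤ ⋯` form a chain of
subspaces of `M_n(K)` starting at the line `K ∙ 1`, and since `W ^ (k + 2) = W * W ^ (k + 1)`
the chain is constant from the first `k` with `W ^ k = W ^ (k + 1)` on. Counting dimensions,
this happens at some `k ≤ n² - 1`, so `W ^ (n² - 1)` is closed under multiplication and
contains the whole algebra. It is spanned by the words of length at most `n² - 1` in the `a j`,
which are products of the required shape with all exponents equal to `1 ≤ n - 1`.
-/

open Matrix

noncomputable section

section Chain

variable {K M : Type*} [Field K] [AddCommGroup M] [Module K M] [FiniteDimensional K M]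

theorem Submodule.exists_le_finrank_sub_eq_succ_of_monotone {V : ℕ → Submodule K M}
    (hV : Monotone V) :
    ∃ k ≤ Module.finrank K M - Module.finrank K (V 0), V k = V (k + 1) := by
  by_contra! hstrict
  have hgrowth : ∀ k ≤ Module.finrank K M - Module.finrank K (V 0) + 1,
      Module.finrank K (V 0) + k ≤ Module.finrank K (V k) := by
    intro k hk
    induction k with
    | zero => simp
    | succ k ih =>
      have hlt : V k < V (k + 1) := (hV k.le_succ).lt_of_ne (hstrict k (by omega))
      have := Submodule.finrank_lt_finrank_of_lt hlt
      have := ih (by omega)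
      omega
  have := hgrowth _ le_rfl
  have := Submodule.finrank_le (V (Module.finrank K M - Module.finrank K (V 0) + 1))
  omega

end Chain

namespace Submodule

theorem pow_le_pow_of_pow_eq_pow_succ {R A : Type*} [CommSemiring R] [Semiring A] [Algebra R A]
    {W : Submodule R A} (h1 : 1 ≤ W) {k : ℕ} (hk : W ^ k = W ^ (k + 1)) (m : ℕ) :
    W ^ m ≤ W ^ k := by
  have hstable : ∀ t, W ^ (k + t) = W ^ k := by
    intro t
    induction t with
    | zero => rfl
    | succ t ih => rw [← add_assoc, pow_succ', ih, ← pow_succ', ← hk]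
  rcases le_total m k with hm | hm
  · exact pow_le_pow_right' h1 hm
  · rw [← hstable (m - k), Nat.add_sub_cancel' hm]

variable {K A : Type*} [Field K] [Ring A] [Algebra K A] [FiniteDimensional K A] [Nontrivial A]

theorem pow_le_pow_finrank_sub_one {W : Submodule K A} (h1 : 1 ≤ W) (m : ℕ) :
    W ^ m ≤ W ^ (Module.finrank K A - 1) := by
  obtain ⟨k, hk, hstable⟩ :=
    exists_le_finrank_sub_eq_succ_of_monotone fun _ _ h => pow_le_pow_right' h1 h
  have hfinrank_one : Module.finrank K (1 : Submodule K A) = 1 := by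
    rw [one_eq_span, finrank_span_singleton one_ne_zero]
  rw [pow_zero, hfinrank_one] at hk
  exact (pow_le_pow_of_pow_eq_pow_succ h1 hstable m).trans (pow_le_pow_right' h1 hk)

end Submodule

theorem Algebra.adjoin_le_span_insert_one_pow {K A : Type*} [Field K] [Ring A] [Algebra K A]
    [FiniteDimensional K A] [Nontrivial A] (s : Set A) :
    Subalgebra.toSubmodule (Algebra.adjoin K s) ≤
      Submodule.span K (insert 1 s) ^ (Module.finrank K A - 1) := by
  set W := Submodule.span K (insert 1 s)
  have h1 : 1 ≤ W := Submodule.one_le.2 (Submodule.subset_span (Set.mem_insert 1 s))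
  intro x hx
  induction hx using Algebra.adjoin_induction with
  | mem x hx =>
    exact W.pow_le_pow_finrank_sub_one h1 1
      ((pow_one W).symm ▸ Submodule.subset_span (Set.mem_insert_of_mem 1 hx))
  | algebraMap r => exact W.pow_le_pow_finrank_sub_one h1 0 (Submodule.algebraMap_mem r)
  | add _ _ _ _ hx hy => exact add_mem hx hy
  | mul _ _ _ _ hx hy =>
    refine W.pow_le_pow_finrank_sub_one h1
      ((Module.finrank K A - 1) + (Module.finrank K A - 1)) ?_
    rw [pow_add]
    exact Submodule.mul_mem_mul hx hy

section PowerProducts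

variable {ι A : Type*}

def boundedPowerProducts [Monoid A] (a : ι → A) (m N : ℕ) : Set A :=
  { M | ∃ (p : ℕ) (j : Fin p → ι) (e : Fin p → ℕ),
    (∀ r, 1 ≤ e r ∧ e r ≤ m) ∧ (∑ r, e r) ≤ N ∧ M = (List.ofFn fun r => a (j r) ^ e r).prod }

variable [Monoid A] {a : ι → A} {m N : ℕ}

theorem one_mem_boundedPowerProducts : (1 : A) ∈ boundedPowerProducts a m N :=
  ⟨0, Fin.elim0, Fin.elim0, nofun, by simp, by simp⟩

theorem boundedPowerProducts_mono : Monotone (boundedPowerProducts a m) :=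
  fun _ _ hN _ ⟨p, j, e, he, hsum, hM⟩ => ⟨p, j, e, he, hsum.trans hN, hM⟩

theorem mul_mem_boundedPowerProducts (hm : 1 ≤ m) (i : ι) {x : A}
    (hx : x ∈ boundedPowerProducts a m N) : a i * x ∈ boundedPowerProducts a m (N + 1) := by
  obtain ⟨p, j, e, he, hsum, rfl⟩ := hx
  refine ⟨p + 1, Fin.cons i j, Fin.cons 1 e, Fin.cases ⟨le_rfl, hm⟩ he, ?_, ?_⟩
  · rw [Fin.sum_cons]
    omega
  · simp [List.ofFn_succ]

end PowerProducts

section Span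

variable {R ι A : Type*} [CommSemiring R] [Semiring A] [Algebra R A] {a : ι → A} {m : ℕ}

theorem span_insert_one_range_pow_le_span_boundedPowerProducts (hm : 1 ≤ m) (N : ℕ) :
    Submodule.span R (insert 1 (Set.range a)) ^ N ≤
      Submodule.span R (boundedPowerProducts a m N) := by
  induction N with
  | zero =>
    rw [pow_zero, Submodule.one_le]
    exact Submodule.subset_span one_mem_boundedPowerProducts
  | succ N ih =>
    rw [pow_succ']
    refine (mul_le_mul' le_rfl ih).trans ?_
    rw [Submodule.span_mul_span, Submodule.span_le]
    rintro _ ⟨y, hy, x, hx, rfl⟩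
    dsimp only
    rcases hy with rfl | ⟨i, rfl⟩
    · rw [one_mul]
      exact Submodule.subset_span (boundedPowerProducts_mono N.le_succ hx)
    · exact Submodule.subset_span (mul_mem_boundedPowerProducts hm i hx)

theorem boundedPowerProducts_subset_adjoin (N : ℕ) :
    boundedPowerProducts a m N ⊆ Algebra.adjoin R (Set.range a) := by
  rintro _ ⟨p, j, e, -, -, rfl⟩
  refine Subalgebra.list_prod_mem _ fun x hx => ?_
  obtain ⟨r, rfl⟩ := List.mem_ofFn.1 hx
  exact pow_mem (Algebra.subset_adjoin (Set.mem_range_self (j r))) _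

end Span

theorem stmt11_general (K : Type*) [Field K] (n s : ℕ) (hn : 2 ≤ n)
    (a : Fin s → Matrix (Fin n) (Fin n) K) :
    Subalgebra.toSubmodule (Algebra.adjoin K (Set.range a)) =
      Submodule.span K
        { M | ∃ (p : ℕ) (j : Fin p → Fin s) (e : Fin p → ℕ),
          (∀ r, 1 ≤ e r ∧ e r ≤ n - 1) ∧ (∑ r, e r) ≤ n ^ 2 - 1 ∧
          M = (List.ofFn fun r => a (j r) ^ e r).prod } := by
  have : NeZero n := ⟨by omega⟩
  have hfinrank : Module.finrank K (Matrix (Fin n) (Fin n) K) = n ^ 2 := by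
    simp [Module.finrank_matrix, sq]
  refine le_antisymm ?_ (Submodule.span_le.2 (boundedPowerProducts_subset_adjoin _))
  calc Subalgebra.toSubmodule (Algebra.adjoin K (Set.range a))
      _ ≤ Submodule.span K (insert 1 (Set.range a)) ^ (n ^ 2 - 1) :=
        hfinrank ▸ Algebra.adjoin_le_span_insert_one_pow _
      _ ≤ Submodule.span K (boundedPowerProducts a (n - 1) (n ^ 2 - 1)) :=
        span_insert_one_range_pow_le_span_boundedPowerProducts (by omega) _

/-- The `K`-subalgebra of `M_n(K)` generated by `a_1, …, a_s` is `K`-linearly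
spanned by the products `a_{j_1}^{i_1} ⋯ a_{j_p}^{i_p}` with all exponents between `1` and
`n - 1` and total degree at most `n² - 1`. -/
theorem stmt11 (K : Type*) [Field K] (n s : ℕ) (hn : 2 ≤ n) (hs : 1 ≤ s)
    (a : Fin s → Matrix (Fin n) (Fin n) K) :
    Subalgebra.toSubmodule (Algebra.adjoin K (Set.range a)) =
      Submodule.span K
        { M | ∃ (p : ℕ) (j : Fin p → Fin s) (e : Fin p → ℕ),
          (∀ r, 1 ≤ e r ∧ e r ≤ n - 1) ∧ (∑ r, e r) ≤ n ^ 2 - 1 ∧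
          M = (List.ofFn fun r => a (j r) ^ e r).prod } :=
  stmt11_general K n s hn a
end
end

section
/- Let K be a field and ℓ, m positive integers. If Λ is a K-subalgebra of E_{(ℓ,m)}(K) with SupDiag_{ℓ+m} ∈ Λ, then K^{ℓ+m}, viewed as a left Λ-module via matrix multiplication on column vectors, is indecomposable (it is not the direct sum of two nonzero Λ-submodules). -/
open Matrix

noncomputable section

/-- Every nonzero submodule invariant under the superdiagonal shift contains
`Pi.single 0 1`. -/
lemma supDiag_invariant_contains_single (K : Type*) [Field K] (n : ℕ) (hn1 : 0 < n)
    (W : Submodule K (Fin n → K)) (hinv : ∀ v ∈ W, (supDiag K n).mulVec v ∈ W)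
    (hW : W ≠ ⊥) : (Pi.single (⟨0, hn1⟩ : Fin n) (1 : K)) ∈ W := by
  set N := supDiag K n with hN
  have hmv : ∀ (v : Fin n → K) (i : Fin n), N.mulVec v i
      = if h : (i : ℕ) + 1 < n then v ⟨(i : ℕ) + 1, h⟩ else 0 := by
    intro v i
    simp only [mulVec, dotProduct, hN, supDiag, Matrix.of_apply]
    split
    case isTrue h =>
      rw [Finset.sum_eq_single (⟨(i : ℕ) + 1, h⟩ : Fin n)]
      · simp
      · intro j _ hj
        rw [if_neg, zero_mul]
        intro he
        exact hj (Fin.ext he.symm)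
      · simp
    case isFalse h =>
      apply Finset.sum_eq_zero
      intro j _
      rw [if_neg, zero_mul]
      intro he
      exact h (he ▸ j.isLt)
  have hiter : ∀ (k : ℕ) (v : Fin n → K) (i : Fin n),
      (fun w => N.mulVec w)^[k] v i
        = if h : (i : ℕ) + k < n then v ⟨(i : ℕ) + k, h⟩ else 0 := by
    intro k
    induction k with
    | zero => intro v i; simp
    | succ k ih =>
      intro v i
      rw [Function.iterate_succ_apply', hmv]
      split
      case isTrue h =>
        rw [ih]
        simp only [Fin.val_mk]
        split
        case isTrue h2 =>
          rw [dif_pos (by omega : (i : ℕ) + (k + 1) < n)]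
          congr 1
          apply Fin.ext
          simp only [Fin.val_mk]
          omega
        case isFalse h2 =>
          rw [dif_neg (by omega)]
      case isFalse h =>
        rw [dif_neg (by omega)]
  have hnil : ∀ v : Fin n → K, (fun w => N.mulVec w)^[n] v = 0 := by
    intro v
    funext i
    rw [hiter, dif_neg (by omega)]
    rfl
  set u : Fin n → K := Pi.single ⟨0, hn1⟩ 1 with hu
  have hker : ∀ w : Fin n → K, N.mulVec w = 0 → w = w ⟨0, hn1⟩ • u := by
    intro w hw
    funext j
    by_cases hj : (j : ℕ) = 0
    · have hje : j = ⟨0, hn1⟩ := Fin.ext hj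
      subst hje
      simp [hu]
    · have hj1 : 1 ≤ (j : ℕ) := by omega
      have hz := congrFun hw ⟨(j : ℕ) - 1, by omega⟩
      rw [hmv] at hz
      simp only [Pi.zero_apply] at hz
      rw [dif_pos (by simp; omega : ((⟨(j : ℕ) - 1, by omega⟩ : Fin n) : ℕ) + 1 < n)] at hz
      have hjj : (⟨((⟨(j : ℕ) - 1, by omega⟩ : Fin n) : ℕ) + 1, by simp; omega⟩ : Fin n) = j := by
        apply Fin.ext; simp; omega
      rw [hjj] at hz
      rw [hz]
      have hne : (⟨0, hn1⟩ : Fin n) ≠ j := fun h => hj (by rw [← h])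
      simp [hu, Pi.single_apply, Ne.symm hne]
  obtain ⟨v, hvW, hv⟩ := Submodule.exists_mem_ne_zero_of_ne_bot hW
  have key : ∀ (k : ℕ) (v : Fin n → K), v ∈ W → v ≠ 0 →
      (fun w => N.mulVec w)^[k] v = 0 → ∃ w ∈ W, w ≠ 0 ∧ N.mulVec w = 0 := by
    intro k
    induction k with
    | zero => intro v _ hv h0; exact absurd h0 hv
    | succ k ih =>
      intro v hvW hv h0
      by_cases hfv : N.mulVec v = 0
      · exact ⟨v, hvW, hv, hfv⟩
      · exact ih (N.mulVec v) (hinv v hvW) hfv (by rwa [← Function.iterate_succ_apply])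
  obtain ⟨w, hwW, hw0, hwk⟩ := key n v hvW hv (hnil v)
  have hrep := hker w hwk
  have hw00 : w ⟨0, hn1⟩ ≠ 0 := by
    intro h
    exact hw0 (by rw [hrep, h, zero_smul])
  set c := w ⟨0, hn1⟩ with hc
  have hW' : c⁻¹ • w ∈ W := W.smul_mem _ hwW
  have heq : c⁻¹ • w = u := by
    rw [hrep, smul_smul, inv_mul_cancel₀ hw00, one_smul]
  rwa [heq] at hW'

/-- If `Λ ⊆ E_{(ℓ,m)}(K)` contains `SupDiag_{ℓ+m}`, then `K^{ℓ+m}` is an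
indecomposable left `Λ`-module. -/
theorem stmt15 (K : Type*) [Field K] (ℓ m : ℕ) (hℓ : 0 < ℓ) (hm : 0 < m)
    (Λ : Subalgebra K (Matrix (Fin (ℓ + m)) (Fin (ℓ + m)) K)) (hΛE : Λ ≤ Eblk K ℓ m)
    (hsup : supDiag K (ℓ + m) ∈ Λ) :
    ¬ ∃ W₁ W₂ : Submodule K (Fin (ℓ + m) → K),
        W₁ ≠ ⊥ ∧ W₂ ≠ ⊥ ∧
        (∀ M ∈ Λ, ∀ v ∈ W₁, M.mulVec v ∈ W₁) ∧
        (∀ M ∈ Λ, ∀ v ∈ W₂, M.mulVec v ∈ W₂) ∧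
        W₁ ⊓ W₂ = ⊥ ∧ W₁ ⊔ W₂ = ⊤ := by
  rintro ⟨W₁, W₂, h1, h2, inv1, inv2, hinf, -⟩
  have hn1 : 0 < ℓ + m := by omega
  have hu1 := supDiag_invariant_contains_single K (ℓ + m) hn1 W₁
    (fun v hv => inv1 _ hsup v hv) h1
  have hu2 := supDiag_invariant_contains_single K (ℓ + m) hn1 W₂
    (fun v hv => inv2 _ hsup v hv) h2
  have hmem : Pi.single (⟨0, hn1⟩ : Fin (ℓ + m)) (1 : K) ∈ W₁ ⊓ W₂ := ⟨hu1, hu2⟩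
  rw [hinf] at hmem
  have := congrFun hmem ⟨0, hn1⟩
  simp at this
end
end

section
/- Let K be the algebraic closure of ℚ and let R = ℚ{X,Y,Z}/⟨XY − YX − Z, XZ − ZX, YZ − ZY⟩ be the universal enveloping algebra of the Heisenberg Lie algebra, presented as a quotient of the free associative ℚ-algebra on X, Y, Z. Then there is no nonsplit (1,1)-extension of inequivalent one-dimensional representations of R: every ℚ-algebra homomorphism ρ : R → E_{(1,1)}(K) (upper triangular 2×2 matrices over K) whose two diagonal characters π_1ρ and π_1'ρ are distinct is semisimple. -/
open Matrix

noncomputable section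

private lemma sum_two' {M : Type*} [AddCommMonoid M] (g : Fin (1 + 1) → M) :
    ∑ i, g i = g 0 + g 1 := Fin.sum_univ_two g

private lemma mul_app' {K : Type*} [CommRing K] (M N : Matrix (Fin (1+1)) (Fin (1+1)) K)
    (i j : Fin (1+1)) : (M * N) i j = M i 0 * N 0 j + M i 1 * N 1 j := by
  rw [Matrix.mul_apply]; exact sum_two' _

/-- The defining relations of the universal enveloping algebra of the Heisenberg Lie
algebra: `XY - YX = Z`, `XZ = ZX`, `YZ = ZY`. -/
inductive heisRel : FreeAlgebra ℚ (Fin 3) → FreeAlgebra ℚ (Fin 3) → Prop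
  | xy : heisRel (FreeAlgebra.ι ℚ 0 * FreeAlgebra.ι ℚ 1 -
      FreeAlgebra.ι ℚ 1 * FreeAlgebra.ι ℚ 0) (FreeAlgebra.ι ℚ 2)
  | xz : heisRel (FreeAlgebra.ι ℚ 0 * FreeAlgebra.ι ℚ 2)
      (FreeAlgebra.ι ℚ 2 * FreeAlgebra.ι ℚ 0)
  | yz : heisRel (FreeAlgebra.ι ℚ 1 * FreeAlgebra.ι ℚ 2)
      (FreeAlgebra.ι ℚ 2 * FreeAlgebra.ι ℚ 1)

set_option maxHeartbeats 1000000 in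
/-- The enveloping algebra of the Heisenberg Lie algebra has no nonsplit
extension of inequivalent one-dimensional representations: every representation
`ρ : R → E_{(1,1)}(K)` with distinct diagonal characters is semisimple. -/
theorem stmt17
    (ρ : RingQuot heisRel →ₐ[ℚ]
      Matrix (Fin (1 + 1)) (Fin (1 + 1)) (AlgebraicClosure ℚ))
    (hE : ∀ a, ρ a ∈ Eblk (AlgebraicClosure ℚ) 1 1)
    (hdist : ∃ a, ρ a ⟨0, by omega⟩ ⟨0, by omega⟩ ≠ ρ a ⟨1, by omega⟩ ⟨1, by omega⟩) :
    IsSemisimpleRing (Algebra.adjoin (AlgebraicClosure ℚ) (Set.range ρ)) := by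
  classical
  set K := AlgebraicClosure ℚ with hKdef
  -- lower-left entries vanish
  have hlow : ∀ a, ρ a 1 0 = 0 := fun a =>
    hE a (show blkIdx 1 1 (0 : Fin (1 + 1)) < blkIdx 1 1 (1 : Fin (1 + 1)) by decide)
  -- multiplicativity of the entries
  have hm00 : ∀ a b, ρ (a * b) 0 0 = ρ a 0 0 * ρ b 0 0 := by
    intro a b
    rw [_root_.map_mul, mul_app', hlow, mul_zero, add_zero]
  have hm11 : ∀ a b, ρ (a * b) 1 1 = ρ a 1 1 * ρ b 1 1 := by
    intro a b
    rw [_root_.map_mul, mul_app', hlow, zero_mul, zero_add]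
  have hm01 : ∀ a b, ρ (a * b) 0 1 = ρ a 0 0 * ρ b 0 1 + ρ a 0 1 * ρ b 1 1 := by
    intro a b
    rw [_root_.map_mul, mul_app']
  -- the generators
  set x := RingQuot.mkAlgHom ℚ heisRel (FreeAlgebra.ι ℚ 0) with hxdef
  set y := RingQuot.mkAlgHom ℚ heisRel (FreeAlgebra.ι ℚ 1) with hydef
  set z := RingQuot.mkAlgHom ℚ heisRel (FreeAlgebra.ι ℚ 2) with hzdef
  -- induction principle
  have ind : ∀ P : RingQuot heisRel → Prop,
      (∀ q : ℚ, P (algebraMap ℚ (RingQuot heisRel) q)) → P x → P y → P z →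
      (∀ a b, P a → P b → P (a * b)) → (∀ a b, P a → P b → P (a + b)) → ∀ a, P a := by
    intro P h0 hx hy hz hmul hadd a
    obtain ⟨b, rfl⟩ := RingQuot.mkAlgHom_surjective ℚ heisRel a
    induction b using FreeAlgebra.induction with
    | grade0 q => rw [AlgHom.commutes]; exact h0 q
    | grade1 i =>
      fin_cases i
      · exact hx
      · exact hy
      · exact hz
    | mul a b ha hb => rw [_root_.map_mul]; exact hmul _ _ ha hb
    | add a b ha hb => rw [_root_.map_add]; exact hadd _ _ ha hb
  -- the relations
  have hr1 : ρ x * ρ y - ρ y * ρ x = ρ z := by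
    have h := congrArg ρ (RingQuot.mkAlgHom_rel ℚ heisRel.xy)
    simp only [_root_.map_sub, _root_.map_mul] at h
    exact h
  have hr2 : ρ x * ρ z = ρ z * ρ x := by
    have h := congrArg ρ (RingQuot.mkAlgHom_rel ℚ heisRel.xz)
    simp only [_root_.map_mul] at h
    exact h
  have hr3 : ρ y * ρ z = ρ z * ρ y := by
    have h := congrArg ρ (RingQuot.mkAlgHom_rel ℚ heisRel.yz)
    simp only [_root_.map_mul] at h
    exact h
  -- entrywise consequences of the relations
  have q1 : ∀ i j, (ρ x * ρ y) i j - (ρ y * ρ x) i j = ρ z i j := fun i j => by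
    rw [← Matrix.sub_apply, hr1]
  have ha2 : ρ z 0 0 = 0 := by
    have h := q1 0 0
    rw [mul_app', mul_app', hlow x, hlow y] at h
    linear_combination -h
  have hd2 : ρ z 1 1 = 0 := by
    have h := q1 1 1
    rw [mul_app', mul_app', hlow x, hlow y] at h
    linear_combination -h
  have hb2 : ρ z 0 1 = ρ y 0 1 * (ρ x 0 0 - ρ x 1 1) - ρ x 0 1 * (ρ y 0 0 - ρ y 1 1) := by
    have h := q1 0 1
    rw [mul_app', mul_app'] at h
    linear_combination -h
  have hc2 : ρ z 0 1 * (ρ x 0 0 - ρ x 1 1) = 0 := by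
    have h := congrFun (congrFun hr2 0) 1
    rw [mul_app', mul_app', ha2, hd2] at h
    linear_combination h
  have hc3 : ρ z 0 1 * (ρ y 0 0 - ρ y 1 1) = 0 := by
    have h := congrFun (congrFun hr3 0) 1
    rw [mul_app', mul_app', ha2, hd2] at h
    linear_combination h
  -- the key uniform description of the off-diagonal entry
  obtain ⟨lam, hlam⟩ : ∃ lam : K, ∀ a, ρ a 0 1 = lam * (ρ a 0 0 - ρ a 1 1) := by
    by_cases h0 : ρ x 0 0 = ρ x 1 1
    · by_cases h1 : ρ y 0 0 = ρ y 1 1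
      · -- degenerate case: the two characters agree, contradicting hdist
        exfalso
        obtain ⟨a, ha⟩ := hdist
        apply ha
        show ρ a 0 0 = ρ a 1 1
        refine ind (fun a => ρ a 0 0 = ρ a 1 1) ?_ h0 h1 (ha2.trans hd2.symm) ?_ ?_ a
        · intro q
          simp [Matrix.algebraMap_matrix_apply]
        · intro a b hA hB
          rw [hm00, hm11, hA, hB]
        · intro a b hA hB
          simp only [_root_.map_add, Matrix.add_apply, hA, hB]
      · -- use Y to define lam
        have hy1 : ρ y 0 0 - ρ y 1 1 ≠ 0 := sub_ne_zero.mpr h1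
        refine ⟨ρ y 0 1 / (ρ y 0 0 - ρ y 1 1), ?_⟩
        have hz0 : ρ z 0 1 = 0 := by
          rcases mul_eq_zero.mp hc3 with h | h
          · exact h
          · exact absurd h hy1
        refine ind _ ?_ ?_ ?_ ?_ ?_ ?_
        · intro q
          simp [Matrix.algebraMap_matrix_apply]
        · -- x : here ρ x 0 0 - ρ x 1 1 = 0 and ρ x 0 1 * (ρ y 0 0 - ρ y 1 1) = 0 from hb2
          have hx0 : ρ x 0 1 * (ρ y 0 0 - ρ y 1 1) = 0 := by
            rw [hz0] at hb2
            linear_combination hb2 + ρ y 0 1 * h0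
          have : ρ x 0 1 = 0 := by
            rcases mul_eq_zero.mp hx0 with h | h
            · exact h
            · exact absurd h hy1
          rw [this, h0, sub_self, mul_zero]
        · field_simp
        · rw [hz0, ha2, hd2, sub_self, mul_zero]
        · intro a b hA hB
          rw [hm00, hm11, hm01, hA, hB]
          ring
        · intro a b hA hB
          simp only [_root_.map_add, Matrix.add_apply, hA, hB]
          ring
    · -- use X to define lam
      have hx1 : ρ x 0 0 - ρ x 1 1 ≠ 0 := sub_ne_zero.mpr h0
      refine ⟨ρ x 0 1 / (ρ x 0 0 - ρ x 1 1), ?_⟩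
      have hz0 : ρ z 0 1 = 0 := by
        rcases mul_eq_zero.mp hc2 with h | h
        · exact h
        · exact absurd h hx1
      refine ind _ ?_ ?_ ?_ ?_ ?_ ?_
      · intro q
        simp [Matrix.algebraMap_matrix_apply]
      · field_simp
      · -- ρ y 0 1 * (ρ x 0 0 - ρ x 1 1) = ρ x 0 1 * (ρ y 0 0 - ρ y 1 1)
        have hy0 : ρ y 0 1 * (ρ x 0 0 - ρ x 1 1) = ρ x 0 1 * (ρ y 0 0 - ρ y 1 1) := by
          rw [hz0] at hb2
          linear_combination -hb2
        field_simp
        linear_combination hy0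
      · rw [hz0, ha2, hd2, sub_self, mul_zero]
      · intro a b hA hB
        rw [hm00, hm11, hm01, hA, hB]
        ring
      · intro a b hA hB
        simp only [_root_.map_add, Matrix.add_apply, hA, hB]
        ring
  -- conjugating matrices
  set u : Matrix (Fin (1 + 1)) (Fin (1 + 1)) K := !![1, -lam; 0, 1] with hu
  set v : Matrix (Fin (1 + 1)) (Fin (1 + 1)) K := !![1, lam; 0, 1] with hv
  have huv : u * v = 1 := by
    rw [hu, hv]
    ext i j
    fin_cases i <;> fin_cases j <;>
      simp [Matrix.mul_apply, Fin.sum_univ_succ, Matrix.vecMul, Matrix.diagonal,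
      dotProduct, Matrix.vecHead, Matrix.vecTail, Matrix.one_apply, Fin.ext_iff]
  have hvu : v * u = 1 := by
    rw [hu, hv]
    ext i j
    fin_cases i <;> fin_cases j <;>
      simp [Matrix.mul_apply, Fin.sum_univ_succ, Matrix.vecMul, Matrix.diagonal,
      dotProduct, Matrix.vecHead, Matrix.vecTail, Matrix.one_apply, Fin.ext_iff]
  let ψ : (Fin (1 + 1) → K) →ₐ[K] Matrix (Fin (1 + 1)) (Fin (1 + 1)) K :=
    { toFun := fun d => u * Matrix.diagonal d * v
      map_one' := by
        show u * Matrix.diagonal 1 * v = 1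
        have h1 : (Matrix.diagonal 1 : Matrix (Fin (1 + 1)) (Fin (1 + 1)) K) = 1 :=
          Matrix.diagonal_one
        rw [h1, mul_one, huv]
      map_mul' := fun d e => by
        show u * Matrix.diagonal (d * e) * v
            = u * Matrix.diagonal d * v * (u * Matrix.diagonal e * v)
        have hde : (Matrix.diagonal (d * e) : Matrix (Fin (1 + 1)) (Fin (1 + 1)) K)
            = Matrix.diagonal d * Matrix.diagonal e := (Matrix.diagonal_mul_diagonal d e).symm
        rw [hde]
        simp only [mul_assoc]
        rw [← mul_assoc v u, hvu, one_mul]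
      map_zero' := by
        show u * Matrix.diagonal 0 * v = 0
        have h0 : (Matrix.diagonal 0 : Matrix (Fin (1 + 1)) (Fin (1 + 1)) K) = 0 :=
          Matrix.diagonal_zero
        rw [h0, mul_zero, zero_mul]
      map_add' := fun d e => by
        show u * Matrix.diagonal (d + e) * v
            = u * Matrix.diagonal d * v + u * Matrix.diagonal e * v
        have hde : (Matrix.diagonal (d + e) : Matrix (Fin (1 + 1)) (Fin (1 + 1)) K)
            = Matrix.diagonal d + Matrix.diagonal e := (Matrix.diagonal_add d e).symm
        rw [hde, mul_add, add_mul]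
      commutes' := fun r => by
        show u * Matrix.diagonal (algebraMap K (Fin (1 + 1) → K) r) * v = _
        rw [← Matrix.algebraMap_eq_diagonal, Algebra.algebraMap_eq_smul_one,
          mul_smul_comm, mul_one, smul_mul_assoc, huv] }
  have hψ : ∀ d, ψ d = u * Matrix.diagonal d * v := fun d => rfl
  -- the representation is conjugated-diagonal
  have hrep : ∀ a, ρ a = ψ ![ρ a 0 0, ρ a 1 1] := by
    intro a
    have h01 := hlam a
    have h10 := hlow a
    have hlit : u * Matrix.diagonal ![ρ a 0 0, ρ a 1 1] * v
        = !![ρ a 0 0, lam * (ρ a 0 0 - ρ a 1 1); 0, ρ a 1 1] := by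
      rw [hu, hv]
      ext i j
      fin_cases i <;> fin_cases j <;>
        simp [Matrix.mul_apply, Fin.sum_univ_succ, Matrix.vecMul, Matrix.diagonal,
      dotProduct, Matrix.vecHead, Matrix.vecTail, Matrix.one_apply, Fin.ext_iff] <;> ring
    rw [hψ, hlit]
    conv_lhs => rw [Matrix.eta_fin_two (ρ a)]
    rw [h01, h10]
  obtain ⟨t, ht⟩ := hdist
  have ht' : ρ t 0 0 ≠ ρ t 1 1 := ht
  have hΔ : ρ t 0 0 - ρ t 1 1 ≠ 0 := sub_ne_zero.mpr ht'
  set P := ψ ![1, 0] with hP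
  have hPmem : P ∈ Algebra.adjoin K (Set.range ⇑ρ) := by
    have h2 : (![ρ t 0 0, ρ t 1 1] : Fin (1 + 1) → K)
        = ρ t 1 1 • 1 + (ρ t 0 0 - ρ t 1 1) • ![1, 0] := by
      funext j; fin_cases j <;> simp [Pi.smul_apply] <;> ring
    have h3 : ρ t = ρ t 1 1 • 1 + (ρ t 0 0 - ρ t 1 1) • P := by
      conv_lhs => rw [hrep t]
      rw [h2, _root_.map_add, _root_.map_smul, _root_.map_smul, _root_.map_one, hP]
    have h4' : ρ t - ρ t 1 1 • 1 = (ρ t 0 0 - ρ t 1 1) • P := sub_eq_of_eq_add' h3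
    have h4 : P = (ρ t 0 0 - ρ t 1 1)⁻¹ • (ρ t - ρ t 1 1 • 1) := by
      rw [h4', smul_smul, inv_mul_cancel₀ hΔ, one_smul]
    rw [h4]
    exact Subalgebra.smul_mem _ (Subalgebra.sub_mem _ (Algebra.subset_adjoin (Set.mem_range_self t))
      (Subalgebra.smul_mem _ (Subalgebra.one_mem _) _)) _
  have hrange : Algebra.adjoin K (Set.range ⇑ρ) = ψ.range := by
    apply le_antisymm
    · rw [Algebra.adjoin_le_iff]
      rintro _ ⟨a, rfl⟩
      exact ⟨![ρ a 0 0, ρ a 1 1], (hrep a).symm⟩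
    · rintro M ⟨d, rfl⟩
      have hdec : ψ d = d 0 • P + d 1 • (1 - P) := by
        have hd : d = d 0 • ![1, 0] + d 1 • (1 - ![1, 0]) := by
          funext j; fin_cases j <;>
            simp [Pi.smul_apply, Pi.sub_apply, Pi.one_apply, Matrix.vecHead, Matrix.vecTail]
        rw [hP, ← _root_.map_one ψ, ← _root_.map_sub, ← _root_.map_smul, ← _root_.map_smul,
          ← _root_.map_add, ← hd]
      show ψ d ∈ Algebra.adjoin K (Set.range ⇑ρ)
      rw [hdec]
      exact Subalgebra.add_mem _ (Subalgebra.smul_mem _ hPmem _)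
        (Subalgebra.smul_mem _ (Subalgebra.sub_mem _ (Subalgebra.one_mem _) hPmem) _)
  rw [hrange]
  have hinj : Function.Injective ψ := by
    rw [injective_iff_map_eq_zero]
    intro d hd
    have hd' : u * Matrix.diagonal d * v = 0 := hd
    have hD : Matrix.diagonal d = 0 := by
      calc Matrix.diagonal d = v * u * Matrix.diagonal d * (v * u) := by
            rw [hvu, one_mul, mul_one]
        _ = v * (u * Matrix.diagonal d * v) * u := by simp only [mul_assoc]
        _ = 0 := by rw [hd', mul_zero, zero_mul]
    have := Matrix.diagonal_injective (hD.trans Matrix.diagonal_zero.symm)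
    exact this
  exact (AlgEquiv.ofInjective ψ hinj).toRingEquiv.isSemisimpleRing
end
end
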